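/- arXiv:1901.05853 — 5 statements merged into one kernel-verified Lean document; each statement's English description precedes it below -/
import Mathlib

section
/- Let A be a separable C*-algebra whose set of tracial states T(A) is non-empty and weak*-compact, and let ω be a free (non-principal) ultrafilter on ℕ. Let (x_n) be a sequence in the closed unit ball of A such that for every a ∈ A both lim_{n→ω} ‖a x_n‖_{2,T(A)} = 0 and lim_{n→ω} ‖x_n a‖_{2,T(A)} = 0. Then lim_{n→ω} ‖x_n‖_{2,T(A)} = 0. (This is a representative-sequence formulation of the statement that an element of the uniform tracial ultrapower A^ω annihilated on both sides by the canonical image of A must be zero.) -/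
open scoped ComplexOrder

/-- The set of tracial states of a C⋆-algebra `A`, regarded as a subset of the weak-* dual
`WeakDual ℂ A`: continuous linear functionals `τ` of norm one with `τ (a* a) ≥ 0` for all `a`
and `τ (ab) = τ (ba)` for all `a, b`. -/
def tracialStates (A : Type*) [NonUnitalCStarAlgebra A] : Set (WeakDual ℂ A) :=
  {τ | ‖WeakDual.toStrongDual τ‖ = 1 ∧ (∀ a : A, 0 ≤ τ (star a * a)) ∧
      ∀ a b : A, τ (a * b) = τ (b * a)}

/-- The uniform tracial seminorm `‖a‖_{2,T(A)} = sup_{τ ∈ T(A)} τ(a* a)^{1/2}`. -/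
noncomputable def uniformTracialSeminorm (A : Type*) [NonUnitalCStarAlgebra A] (a : A) : ℝ :=
  ⨆ τ : tracialStates A, Real.sqrt ((τ : WeakDual ℂ A) (star a * a)).re

open scoped CStarAlgebra

section PosFun

set_option linter.unusedSectionVars false

variable {B : Type*} [NonUnitalRing B] [StarRing B] [Module ℂ B] [StarModule ℂ B]
  [SMulCommClass ℂ B B] [IsScalarTower ℂ B B]

lemma pos_im (φ : B →ₗ[ℂ] ℂ) (hφ : ∀ b, 0 ≤ φ (star b * b)) (b : B) :
    (φ (star b * b)).im = 0 ∧ 0 ≤ (φ (star b * b)).re := by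
  have := hφ b
  rw [Complex.le_def] at this
  simpa using ⟨this.2.symm, this.1⟩

lemma herm (φ : B →ₗ[ℂ] ℂ) (hφ : ∀ b, 0 ≤ φ (star b * b)) (x y : B) :
    φ (star y * x) = (starRingEnd ℂ) (φ (star x * y)) := by
  have key : ∀ v : B, star (x + v) * (x + v) =
      star x * x + star x * v + star v * x + star v * v := by
    intro v
    rw [star_add]
    noncomm_ring
  have h1 : (φ (star x * y)).im + (φ (star y * x)).im = 0 := by
    have h := (pos_im φ hφ (x + y)).1
    rw [key y] at h
    simp only [map_add, Complex.add_im] at h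
    rw [(pos_im φ hφ x).1, (pos_im φ hφ y).1] at h
    linarith
  have h2 : (φ (star x * y)).re - (φ (star y * x)).re = 0 := by
    have h := (pos_im φ hφ (x + (Complex.I • y))).1
    rw [key (Complex.I • y)] at h
    have e1 : star x * (Complex.I • y) = Complex.I • (star x * y) := mul_smul_comm _ _ _
    have e2 : star (Complex.I • y) * x = (starRingEnd ℂ Complex.I) • (star y * x) := by
      rw [star_smul, smul_mul_assoc]; rfl
    have e3 : star (Complex.I • y) * (Complex.I • y)
        = (starRingEnd ℂ Complex.I * Complex.I) • (star y * y) := by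
      rw [star_smul, smul_mul_assoc, mul_smul_comm, smul_smul]; rfl
    rw [e1, e2, e3, Complex.conj_I, neg_mul, Complex.I_mul_I, neg_neg, one_smul] at h
    simp only [map_add, map_smul, smul_eq_mul, neg_smul, map_neg, Complex.add_im,
      Complex.neg_im, Complex.mul_im, Complex.I_re, Complex.I_im] at h
    rw [(pos_im φ hφ x).1, (pos_im φ hφ y).1] at h
    linarith
  apply Complex.ext
  · simpa [Complex.conj_re] using (sub_eq_zero.mp h2).symm
  · simp only [Complex.conj_im]; linarith

lemma cs (φ : B →ₗ[ℂ] ℂ) (hφ : ∀ b, 0 ≤ φ (star b * b)) (x y : B) :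
    ‖φ (star x * y)‖ ^ 2 ≤ (φ (star x * x)).re * (φ (star y * y)).re := by
  letI c : PreInnerProductSpace.Core ℂ B :=
    { inner := fun a b => φ (star a * b)
      conj_inner_symm := fun a b => (herm φ hφ b a).symm
      re_inner_nonneg := fun a => (pos_im φ hφ a).2
      add_left := fun a b z => by
        show φ (star (a + b) * z) = φ (star a * z) + φ (star b * z)
        rw [star_add, add_mul, map_add]
      smul_left := fun a b r => by
        show φ (star (r • a) * b) = (starRingEnd ℂ) r * φ (star a * b)
        rw [star_smul, smul_mul_assoc, map_smul, smul_eq_mul]; rfl }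
  letI : Inner ℂ B := InnerProductSpace.Core.toPreInner'
  have h := InnerProductSpace.Core.inner_mul_inner_self_le (𝕜 := ℂ) x y
  have hxy : (inner ℂ x y : ℂ) = φ (star x * y) := rfl
  have hyx : ‖(inner ℂ y x : ℂ)‖ = ‖φ (star x * y)‖ := by
    show ‖φ (star y * x)‖ = _
    rw [herm φ hφ x y]
    exact RCLike.norm_conj _
  rw [hxy, hyx] at h
  have hxx : (inner ℂ x x : ℂ) = φ (star x * x) := rfl
  have hyy : (inner ℂ y y : ℂ) = φ (star y * y) := rfl
  rw [hxx, hyy] at h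
  calc ‖φ (star x * y)‖ ^ 2 = ‖φ (star x * y)‖ * ‖φ (star x * y)‖ := sq _
  _ ≤ _ := by simpa using h

lemma pos_closure (φ : B →ₗ[ℂ] ℂ) (hφ : ∀ b, 0 ≤ φ (star b * b)) {p : B}
    (hp : p ∈ AddSubmonoid.closure (Set.range fun s : B => star s * s)) :
    0 ≤ φ p := by
  induction hp using AddSubmonoid.closure_induction with
  | mem x hx =>
    obtain ⟨s, rfl⟩ := hx
    exact hφ s
  | zero => simp
  | add a b _ _ ha hb =>
    rw [map_add]
    exact add_nonneg ha hb

end PosFun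

/-- The spectral order on a non-unital C⋆-algebra, pulled back from the unitization. -/
noncomputable def spectralOrderNonUnital (A : Type*) [NonUnitalCStarAlgebra A] :
    PartialOrder A :=
  letI : PartialOrder A⁺¹ := CStarAlgebra.spectralOrder _
  PartialOrder.lift (fun a : A => (a : A⁺¹)) fun _ _ => Unitization.inr_injective.eq_iff.mp

lemma spectralOrderedRingNonUnital (A : Type*) [NonUnitalCStarAlgebra A] :
    letI := spectralOrderNonUnital A
    StarOrderedRing A := by
  letI := spectralOrderNonUnital A
  letI : PartialOrder A⁺¹ := CStarAlgebra.spectralOrder _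
  haveI : StarOrderedRing A⁺¹ := CStarAlgebra.spectralOrderedRing _
  refine StarOrderedRing.of_le_iff fun a b => ?_
  constructor
  · intro hab
    have hab' : (a : A⁺¹) ≤ (b : A⁺¹) := hab
    have hsub : ((b - a : A) : A⁺¹) = (b : A⁺¹) - (a : A⁺¹) := by
      simp [Unitization.inr_sub ℂ b a]
    have hsa : IsSelfAdjoint (b - a) := by
      have h1 : IsSelfAdjoint ((b : A⁺¹) - (a : A⁺¹)) := hab'.1
      rw [← hsub] at h1
      exact (Unitization.isSelfAdjoint_inr (R := ℂ)).mp h1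
    have hqr : QuasispectrumRestricts (b - a) ContinuousMap.realToNNReal := by
      rw [QuasispectrumRestricts.nnreal_iff]
      intro t ht
      rw [Unitization.quasispectrum_eq_spectrum_inr' ℝ ℂ] at ht
      have h2 : SpectrumRestricts ((b : A⁺¹) - (a : A⁺¹)) ContinuousMap.realToNNReal := hab'.2
      rw [SpectrumRestricts.nnreal_iff] at h2
      exact h2 t (hsub ▸ ht)
    obtain ⟨s, hs, -, hss⟩ :=
      CFC.exists_sqrt_of_isSelfAdjoint_of_quasispectrumRestricts hsa hqr
    exact ⟨s, by rw [hs.star_eq, hss]; abel⟩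
  · rintro ⟨s, rfl⟩
    show (a : A⁺¹) ≤ ((a + star s * s : A) : A⁺¹)
    rw [Unitization.inr_add, Unitization.inr_mul, Unitization.inr_star]
    exact le_add_of_nonneg_right (star_mul_self_nonneg _)

section TS

variable {A : Type*} [NonUnitalCStarAlgebra A]

/-- The underlying linear map of a weak-* functional. -/
noncomputable def tl (τ : WeakDual ℂ A) : A →ₗ[ℂ] ℂ :=
  (WeakDual.toStrongDual τ : A →L[ℂ] ℂ)

lemma tl_apply (τ : WeakDual ℂ A) (a : A) : tl τ a = τ a := rfl

lemma ts_pos (τ : WeakDual ℂ A) (hτ : τ ∈ tracialStates A) :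
    ∀ b : A, 0 ≤ tl τ (star b * b) := fun b => hτ.2.1 b

lemma ts_norm_le (τ : WeakDual ℂ A) (hτ : τ ∈ tracialStates A) (a : A) : ‖τ a‖ ≤ ‖a‖ := by
  have := (WeakDual.toStrongDual τ).le_opNorm a
  rwa [hτ.1, one_mul] at this

lemma ts_cont (τ : WeakDual ℂ A) : Continuous fun a : A => τ a :=
  (WeakDual.toStrongDual τ).continuous

variable [PartialOrder A] [StarOrderedRing A]

open Filter in
/-- Non-unital Cauchy-Schwarz against the norm, for a tracial state. -/
lemma ts_sq_le (τ : WeakDual ℂ A) (hτ : τ ∈ tracialStates A) (a : A) :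
    ‖τ a‖ ^ 2 ≤ (τ (star a * a)).re := by
  have hA := CStarAlgebra.increasingApproximateUnit A
  haveI : (CStarAlgebra.approximateUnit A).NeBot := hA.neBot
  have h1 : Tendsto (fun e : A => τ (e * a)) (CStarAlgebra.approximateUnit A) (nhds (τ a)) :=
    ((ts_cont τ).tendsto a).comp (hA.tendsto_mul_right a)
  have h2 : ∀ᶠ e in CStarAlgebra.approximateUnit A,
      ‖τ (e * a)‖ ^ 2 ≤ (τ (star a * a)).re := by
    filter_upwards [hA.eventually_nonneg, hA.eventually_norm] with e he hne
    have hsa : star e = e := (IsSelfAdjoint.of_nonneg he).star_eq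
    have hcs := cs (tl τ) (ts_pos τ hτ) e a
    rw [hsa] at hcs
    simp only [tl_apply] at hcs
    have hee : (τ (e * e)).re ≤ 1 := by
      calc (τ (e * e)).re ≤ ‖τ (e * e)‖ := Complex.re_le_norm _
      _ ≤ ‖e * e‖ := ts_norm_le τ hτ _
      _ ≤ ‖e‖ * ‖e‖ := norm_mul_le _ _
      _ ≤ 1 := by nlinarith [norm_nonneg e]
    have haa : 0 ≤ (τ (star a * a)).re := by
      have := pos_im (tl τ) (ts_pos τ hτ) a
      simpa [tl_apply] using this.2
    nlinarith [hcs]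
  have h3 : Tendsto (fun e : A => ‖τ (e * a)‖ ^ 2) (CStarAlgebra.approximateUnit A)
      (nhds (‖τ a‖ ^ 2)) := (h1.norm).pow 2
  exact le_of_tendsto h3 h2

open Filter in
lemma ts_star (τ : WeakDual ℂ A) (hτ : τ ∈ tracialStates A) (a : A) :
    τ (star a) = (starRingEnd ℂ) (τ a) := by
  have hA := CStarAlgebra.increasingApproximateUnit A
  haveI : (CStarAlgebra.approximateUnit A).NeBot := hA.neBot
  have h1 : Tendsto (fun e : A => τ (star a * e)) (CStarAlgebra.approximateUnit A)
      (nhds (τ (star a))) := ((ts_cont τ).tendsto _).comp (hA.tendsto_mul_left (star a))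
  have h2 : Tendsto (fun e : A => ((starRingEnd ℂ) (τ (e * a))))
      (CStarAlgebra.approximateUnit A) (nhds ((starRingEnd ℂ) (τ a))) :=
    (Complex.continuous_conj.tendsto _).comp (((ts_cont τ).tendsto a).comp
      (hA.tendsto_mul_right a))
  have heq : ∀ᶠ e in CStarAlgebra.approximateUnit A,
      τ (star a * e) = (starRingEnd ℂ) (τ (e * a)) := by
    filter_upwards [hA.eventually_nonneg] with e he
    have hsa : star e = e := (IsSelfAdjoint.of_nonneg he).star_eq
    have := herm (tl τ) (ts_pos τ hτ) e a
    rw [hsa] at this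
    simpa only [tl_apply] using this
  exact tendsto_nhds_unique (h1.congr' heq) h2

/-- The extension of `τ` to the unitization. -/
noncomputable def tu (τ : WeakDual ℂ A) : A⁺¹ →ₗ[ℂ] ℂ where
  toFun x := x.fst + τ x.snd
  map_add' x y := by
    simp only [Unitization.fst_add, Unitization.snd_add, map_add]; ring
  map_smul' c x := by
    simp only [Unitization.fst_smul, Unitization.snd_smul, map_smul, RingHom.id_apply,
      smul_eq_mul]; ring

lemma tu_inr (τ : WeakDual ℂ A) (a : A) : tu τ (a : A⁺¹) = τ a := by
  simp [tu]

lemma tu_one (τ : WeakDual ℂ A) : tu τ (1 : A⁺¹) = 1 := by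
  simp [tu]

lemma tu_pos (τ : WeakDual ℂ A) (hτ : τ ∈ tracialStates A) :
    ∀ u : A⁺¹, 0 ≤ tu τ (star u * u) := by
  intro u
  have hexp : tu τ (star u * u) = (starRingEnd ℂ) u.fst * u.fst +
      ((starRingEnd ℂ) u.fst * τ u.snd + u.fst * τ (star u.snd) + τ (star u.snd * u.snd)) := by
    simp only [tu, LinearMap.coe_mk, AddHom.coe_mk, Unitization.fst_mul, Unitization.snd_mul,
      Unitization.fst_star, Unitization.snd_star, map_add, map_smul, smul_eq_mul,
      RCLike.star_def]
  rw [hexp, ts_star τ hτ]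
  set t := τ u.snd with ht
  set lam := u.fst
  have him : (τ (star u.snd * u.snd)).im = 0 := by
    have := pos_im (tl τ) (ts_pos τ hτ) u.snd
    simpa [tl_apply] using this.1
  have hre : ‖t‖ ^ 2 ≤ (τ (star u.snd * u.snd)).re := ts_sq_le τ hτ u.snd
  have hnt : ‖t‖ ^ 2 = t.re ^ 2 + t.im ^ 2 := by
    rw [Complex.sq_norm, Complex.normSq_apply]; ring
  rw [hnt] at hre
  rw [Complex.le_def]
  constructor
  · simp only [Complex.add_re, Complex.mul_re, Complex.conj_re, Complex.conj_im, Complex.zero_re]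
    nlinarith [hre, sq_nonneg (lam.re + t.re), sq_nonneg (lam.im + t.im)]
  · simp only [Complex.add_im, Complex.mul_im, Complex.conj_re, Complex.conj_im, Complex.zero_im,
      him]
    ring

lemma ts_key (τ : WeakDual ℂ A) (hτ : τ ∈ tracialStates A) (e z : A) (he : 0 ≤ e)
    (hne : ‖e‖ ≤ 1) (hz : ‖z‖ ≤ 1) :
    (τ (star z * z)).re ≤ (τ (star z * (e * z))).re + Real.sqrt (2 * (1 - (τ e).re)) := by
  set y := z * star z with hy
  have htr := hτ.2.2
  have h1 : τ (star z * z) = τ y := htr (star z) z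
  have h2 : τ (star z * (e * z)) = τ (e * y) := by
    rw [htr (star z) (e * z), mul_assoc]
  have hesa : star e = e := (IsSelfAdjoint.of_nonneg he).star_eq
  have hysa : star y = y := (IsSelfAdjoint.mul_star_self z).star_eq
  have hny : ‖y‖ ≤ 1 := by
    calc ‖y‖ ≤ ‖z‖ * ‖star z‖ := norm_mul_le _ _
    _ ≤ 1 := by rw [norm_star]; nlinarith [norm_nonneg z]
  set u : A⁺¹ := 1 - (e : A⁺¹) with hu
  have husa : star u = u := by rw [hu, star_sub, star_one, ← Unitization.inr_star, hesa]
  have hcs := cs (tu τ) (tu_pos τ hτ) u (y : A⁺¹)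
  rw [husa] at hcs
  have huv : tu τ (u * (y : A⁺¹)) = τ y - τ (e * y) := by
    have : u * (y : A⁺¹) = ((y : A⁺¹) - ((e * y : A) : A⁺¹)) := by
      rw [hu, sub_mul, one_mul, ← Unitization.inr_mul]
    rw [this, map_sub, tu_inr, tu_inr]
  have huu : tu τ (u * u) = 1 - τ e - τ e + τ (e * e) := by
    have : u * u = 1 - (e : A⁺¹) - (e : A⁺¹) + ((e * e : A) : A⁺¹) := by
      rw [hu, Unitization.inr_mul]; noncomm_ring
    rw [this, map_add, map_sub, map_sub, tu_one, tu_inr, tu_inr]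
  have hvv : tu τ (star (y : A⁺¹) * (y : A⁺¹)) = τ (y * y) := by
    rw [← Unitization.inr_star, hysa, ← Unitization.inr_mul, tu_inr]
  have hyy_re : (τ (y * y)).re ≤ 1 := by
    calc (τ (y * y)).re ≤ ‖τ (y * y)‖ := Complex.re_le_norm _
    _ ≤ ‖y * y‖ := ts_norm_le τ hτ _
    _ ≤ ‖y‖ * ‖y‖ := norm_mul_le _ _
    _ ≤ 1 := by nlinarith [norm_nonneg y]
  have hee_re : (τ (e * e)).re ≤ 1 := by
    calc (τ (e * e)).re ≤ ‖τ (e * e)‖ := Complex.re_le_norm _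
    _ ≤ ‖e * e‖ := ts_norm_le τ hτ _
    _ ≤ ‖e‖ * ‖e‖ := norm_mul_le _ _
    _ ≤ 1 := by nlinarith [norm_nonneg e]
  have hyy_nonneg : 0 ≤ (τ (y * y)).re := by
    have := pos_im (tl τ) (ts_pos τ hτ) y
    rw [hysa] at this
    simpa [tl_apply] using this.2
  have he_re : (τ e).re ≤ 1 := by
    calc (τ e).re ≤ ‖τ e‖ := Complex.re_le_norm _
    _ ≤ ‖e‖ := ts_norm_le τ hτ _
    _ ≤ 1 := hne
  rw [huv, huu, hvv] at hcs
  have key : ‖τ y - τ (e * y)‖ ^ 2 ≤ 2 * (1 - (τ e).re) := by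
    calc ‖τ y - τ (e * y)‖ ^ 2 ≤ (1 - τ e - τ e + τ (e * e)).re * (τ (y * y)).re := hcs
    _ ≤ 2 * (1 - (τ e).re) * 1 := by
        apply mul_le_mul
        · simp only [Complex.add_re, Complex.sub_re, Complex.one_re]; linarith
        · exact hyy_re
        · exact hyy_nonneg
        · linarith
    _ = 2 * (1 - (τ e).re) := mul_one _
  have hfin : ‖τ y - τ (e * y)‖ ≤ Real.sqrt (2 * (1 - (τ e).re)) :=
    Real.le_sqrt_of_sq_le key
  rw [h1, h2]
  have hre : (τ y - τ (e * y)).re ≤ ‖τ y - τ (e * y)‖ := Complex.re_le_norm _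
  rw [Complex.sub_re] at hre
  linarith

lemma ts_mono (τ : WeakDual ℂ A) (hτ : τ ∈ tracialStates A) {a b : A} (hab : a ≤ b) :
    (τ a).re ≤ (τ b).re := by
  obtain ⟨p, hp, rfl⟩ := (StarOrderedRing.le_iff a b).mp hab
  have h0 : 0 ≤ tl τ p := pos_closure (tl τ) (ts_pos τ hτ) hp
  rw [Complex.le_def] at h0
  have : τ (a + p) = τ a + τ p := map_add τ a p
  rw [this, Complex.add_re]
  have : 0 ≤ (τ p).re := by simpa [tl_apply] using h0.1
  linarith

lemma finset_upper {ι : Type*} (S : Set A) (hdir : DirectedOn (· ≤ ·) S) (hne : S.Nonempty)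
    (t : Finset ι) (f : ι → A) (hf : ∀ i ∈ t, f i ∈ S) :
    ∃ e ∈ S, ∀ i ∈ t, f i ≤ e := by
  classical
  induction t using Finset.induction_on with
  | empty =>
    obtain ⟨e, he⟩ := hne
    exact ⟨e, he, by simp⟩
  | @insert i t hi ih =>
    obtain ⟨e, heS, hub⟩ := ih fun j hj => hf j (Finset.mem_insert_of_mem hj)
    have hfi : f i ∈ S := hf i (Finset.mem_insert_self i t)
    obtain ⟨c, hcS, hc1, hc2⟩ := hdir (f i) hfi e heS
    refine ⟨c, hcS, fun j hj => ?_⟩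
    rcases Finset.mem_insert.mp hj with rfl | hj
    · exact hc1
    · exact (hub j hj).trans hc2

lemma exists_good_e (hcpt : IsCompact (tracialStates A)) {δ : ℝ} (hδ : 0 < δ) :
    ∃ e : A, 0 ≤ e ∧ ‖e‖ ≤ 1 ∧ ∀ τ ∈ tracialStates A, 1 - δ < (τ e).re := by
  classical
  have point : ∀ τ ∈ tracialStates A, ∃ q : A, 0 ≤ q ∧ ‖q‖ < 1 ∧ 1 - δ < (τ q).re := by
    intro τ hτ
    set θ : ℝ := min (δ / 4) (4⁻¹ : ℝ) with hθdef
    have hθpos : 0 < θ := lt_min (by linarith) (by norm_num)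
    have hθ1 : θ ≤ 4⁻¹ := min_le_right _ _
    have hθδ : θ ≤ δ / 4 := min_le_left _ _
    have hex : ∃ a : A, (1 - θ) * ‖a‖ < ‖τ a‖ := by
      by_contra hcon
      push_neg at hcon
      have hb := ContinuousLinearMap.opNorm_le_bound (WeakDual.toStrongDual τ)
        (by linarith) fun a => hcon a
      rw [hτ.1] at hb
      linarith
    obtain ⟨a, ha⟩ := hex
    have ha0 : 0 < ‖a‖ := by
      rcases eq_or_lt_of_le (norm_nonneg a) with h | h
      · exfalso
        have h1 : ‖τ a‖ ≤ ‖a‖ := ts_norm_le τ hτ a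
        rw [← h] at ha h1
        simp only [mul_zero] at ha
        linarith
      · exact h
    set a' : A := ((‖a‖⁻¹ : ℝ) : ℂ) • a with ha'
    have hna' : ‖a'‖ = 1 := by
      rw [ha', norm_smul]
      simp [norm_inv, abs_of_pos ha0]
      field_simp
    have hta' : 1 - θ < ‖τ a'‖ := by
      have : τ a' = ((‖a‖⁻¹ : ℝ) : ℂ) * τ a := by
        rw [ha', map_smul]; rfl
      rw [this, norm_mul]
      have h2 : ‖((‖a‖⁻¹ : ℝ) : ℂ)‖ = ‖a‖⁻¹ := by
        simp [abs_of_pos (inv_pos.mpr ha0)]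
      rw [h2]
      rw [show (1 : ℝ) - θ = (1 - θ) * ‖a‖ * ‖a‖⁻¹ by field_simp]
      rw [mul_comm (‖a‖⁻¹) (‖τ a‖)]
      exact mul_lt_mul_of_pos_right ha (inv_pos.mpr ha0)
    set b : A := ((Real.sqrt (1 - θ) : ℝ) : ℂ) • a' with hb
    have hθhalf : (0:ℝ) ≤ 1 - θ := by linarith [hθ1]
    refine ⟨star b * b, star_mul_self_nonneg b, ?_, ?_⟩
    · have hnb : ‖b‖ = Real.sqrt (1 - θ) := by
        rw [hb, norm_smul, hna', mul_one]
        simp [abs_of_nonneg (Real.sqrt_nonneg _)]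
      rw [CStarRing.norm_star_mul_self, hnb, Real.mul_self_sqrt hθhalf]
      linarith [hθpos]
    · have hsq := ts_sq_le τ hτ b
      have htb : ‖τ b‖ ^ 2 = (1 - θ) * ‖τ a'‖ ^ 2 := by
        have : τ b = ((Real.sqrt (1 - θ) : ℝ) : ℂ) * τ a' := by
          rw [hb, map_smul]; rfl
        rw [this, norm_mul]
        have : ‖((Real.sqrt (1 - θ) : ℝ) : ℂ)‖ = Real.sqrt (1 - θ) := by
          simp [abs_of_nonneg (Real.sqrt_nonneg _)]
        rw [this, mul_pow, Real.sq_sqrt hθhalf]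
      rw [htb] at hsq
      have h3 : (1 - θ) * (1 - θ) ^ 2 ≤ (1 - θ) * ‖τ a'‖ ^ 2 := by
        apply mul_le_mul_of_nonneg_left _ hθhalf
        nlinarith [hta', hθ1, hθpos]
      have h4 : 1 - δ < (1 - θ) * (1 - θ) ^ 2 := by
        have hcube : (1 - θ) * (1 - θ) ^ 2 = 1 - 3 * θ + θ ^ 2 * (3 - θ) := by ring
        nlinarith [mul_nonneg (sq_nonneg θ) (show (0:ℝ) ≤ 3 - θ by linarith)]
      linarith
  have point' : ∀ i : tracialStates A, ∃ q : A, 0 ≤ q ∧ ‖q‖ < 1 ∧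
      1 - δ < ((i : WeakDual ℂ A) q).re := fun i => point i i.2
  choose q hq0 hq1 hq2 using point'
  set U : tracialStates A → Set (WeakDual ℂ A) := fun i => {σ | 1 - δ < (σ (q i)).re} with hU
  have hUopen : ∀ i, IsOpen (U i) := by
    intro i
    have hc : Continuous fun σ : WeakDual ℂ A => (σ (q i)).re :=
      Complex.continuous_re.comp (WeakDual.eval_continuous (q i))
    exact isOpen_Ioi.preimage hc
  have hcover : tracialStates A ⊆ ⋃ i, U i := fun σ hσ =>
    Set.mem_iUnion.mpr ⟨⟨σ, hσ⟩, hq2 ⟨σ, hσ⟩⟩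
  obtain ⟨t, ht⟩ := hcpt.elim_finite_subcover U hUopen hcover
  obtain ⟨e, heS, hub⟩ := finset_upper ({x : A | 0 ≤ x} ∩ Metric.ball 0 1)
    CStarAlgebra.directedOn_nonneg_ball ⟨0, by simp⟩ t q
    (fun i _ => ⟨hq0 i, by simpa [Metric.mem_ball, dist_zero_right] using hq1 i⟩)
  have hne : ‖e‖ ≤ 1 := by
    have := heS.2
    rw [Metric.mem_ball, dist_zero_right] at this
    linarith
  refine ⟨e, heS.1, hne, fun σ hσ => ?_⟩
  obtain ⟨i, hi, hmem⟩ := Set.mem_iUnion₂.mp (ht hσ)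
  calc 1 - δ < (σ (q i)).re := hmem
  _ ≤ (σ e).re := ts_mono σ hσ (hub i hi)

end TS

/-- Let `A` be a separable C⋆-algebra with `T(A)` non-empty and weak-*-compact,
and let `ω` be a free ultrafilter on `ℕ`. If `(x n)` is a sequence in the closed unit ball of
`A` with `lim_{n→ω} ‖a (x n)‖_{2,T(A)} = 0 = lim_{n→ω} ‖(x n) a‖_{2,T(A)}` for every `a ∈ A`,
then `lim_{n→ω} ‖x n‖_{2,T(A)} = 0`. (An element of `A^ω` annihilated on both sides by the
canonical image of `A` is zero.) -/
theorem stmt2 (A : Type*) [NonUnitalCStarAlgebra A] [TopologicalSpace.SeparableSpace A]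
    (hTA : (tracialStates A).Nonempty) (hcpt : IsCompact (tracialStates A))
    (ω : Ultrafilter ℕ) (hω : (ω : Filter ℕ) ≤ Filter.cofinite)
    (x : ℕ → A) (hx : ∀ n, ‖x n‖ ≤ 1)
    (hleft : ∀ a : A, Filter.Tendsto (fun n => uniformTracialSeminorm A (a * x n))
      (ω : Filter ℕ) (nhds 0))
    (hright : ∀ a : A, Filter.Tendsto (fun n => uniformTracialSeminorm A (x n * a))
      (ω : Filter ℕ) (nhds 0)) :
    Filter.Tendsto (fun n => uniformTracialSeminorm A (x n)) (ω : Filter ℕ) (nhds 0) := by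
  letI := spectralOrderNonUnital A
  haveI := spectralOrderedRingNonUnital A
  haveI : Nonempty (tracialStates A) := hTA.to_subtype
  have hnorm_nonneg : ∀ a : A, 0 ≤ uniformTracialSeminorm A a := fun a =>
    Real.iSup_nonneg fun τ => Real.sqrt_nonneg _
  have hbdd : ∀ a : A, BddAbove (Set.range fun τ' : tracialStates A =>
      Real.sqrt (((τ' : WeakDual ℂ A)) (star a * a)).re) := by
    intro a
    refine ⟨‖a‖, ?_⟩
    rintro r ⟨τ', rfl⟩
    have h1 : (((τ' : WeakDual ℂ A)) (star a * a)).re ≤ ‖a‖ * ‖a‖ := by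
      calc (((τ' : WeakDual ℂ A)) (star a * a)).re ≤ ‖((τ' : WeakDual ℂ A)) (star a * a)‖ :=
        Complex.re_le_norm _
      _ ≤ ‖star a * a‖ := ts_norm_le _ τ'.2 _
      _ = ‖a‖ * ‖a‖ := CStarRing.norm_star_mul_self
    calc Real.sqrt (((τ' : WeakDual ℂ A)) (star a * a)).re ≤ Real.sqrt (‖a‖ * ‖a‖) :=
      Real.sqrt_le_sqrt h1
    _ = ‖a‖ := Real.sqrt_mul_self (norm_nonneg a)
  rw [Metric.tendsto_nhds]
  intro ε hε
  obtain ⟨e, he0, he1, hegood⟩ := exists_good_e hcpt (δ := ((ε / 2) ^ 2) ^ 2 / 2)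
    (by positivity)
  set w := CFC.sqrt e with hwdef
  have hw0 : 0 ≤ w := CFC.sqrt_nonneg _
  have hww : w * w = e := CFC.sqrt_mul_sqrt_self e he0
  have hkey : ∀ n, uniformTracialSeminorm A (x n) ≤
      uniformTracialSeminorm A (w * x n) + ε / 2 := by
    intro n
    apply ciSup_le
    intro τs
    obtain ⟨τ, hτ⟩ := τs
    have heq : star (x n) * (e * x n) = star (w * x n) * (w * x n) := by
      rw [star_mul, (IsSelfAdjoint.of_nonneg hw0).star_eq, mul_assoc, ← mul_assoc w w, hww]
    have h2 : Real.sqrt ((τ (star (w * x n) * (w * x n))).re) ≤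
        uniformTracialSeminorm A (w * x n) := le_ciSup (hbdd (w * x n)) ⟨τ, hτ⟩
    have h3 : 0 ≤ (τ (star (w * x n) * (w * x n))).re := by
      have := pos_im (tl τ) (ts_pos τ hτ) (w * x n)
      simpa [tl_apply] using this.2
    have h1 : (τ (star (x n) * (e * x n))).re ≤ (uniformTracialSeminorm A (w * x n)) ^ 2 := by
      rw [heq]
      calc (τ (star (w * x n) * (w * x n))).re
          = Real.sqrt ((τ (star (w * x n) * (w * x n))).re) ^ 2 := (Real.sq_sqrt h3).symm
      _ ≤ (uniformTracialSeminorm A (w * x n)) ^ 2 := by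
          exact pow_le_pow_left₀ (Real.sqrt_nonneg _) h2 2
    have h4 := ts_key τ hτ e (x n) he0 he1 (hx n)
    have h5 : Real.sqrt (2 * (1 - (τ e).re)) ≤ (ε / 2) ^ 2 := by
      have hg := hegood τ hτ
      have h6 : 2 * (1 - (τ e).re) ≤ ((ε / 2) ^ 2) ^ 2 := by linarith
      calc Real.sqrt (2 * (1 - (τ e).re)) ≤ Real.sqrt (((ε / 2) ^ 2) ^ 2) :=
        Real.sqrt_le_sqrt h6
      _ = (ε / 2) ^ 2 := Real.sqrt_sq (by positivity)
    have hs0 : 0 ≤ uniformTracialSeminorm A (w * x n) := hnorm_nonneg _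
    have h7 : (τ (star (x n) * (x n))).re ≤
        (uniformTracialSeminorm A (w * x n) + ε / 2) ^ 2 := by nlinarith
    calc Real.sqrt ((τ (star (x n) * x n)).re)
        ≤ Real.sqrt ((uniformTracialSeminorm A (w * x n) + ε / 2) ^ 2) :=
          Real.sqrt_le_sqrt h7
    _ = uniformTracialSeminorm A (w * x n) + ε / 2 := Real.sqrt_sq (by positivity)
  have hsmall := hleft w
  rw [Metric.tendsto_nhds] at hsmall
  filter_upwards [hsmall (ε / 2) (by linarith)] with n hn
  rw [Real.dist_eq, sub_zero] at hn ⊢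
  have h8 : uniformTracialSeminorm A (w * x n) < ε / 2 := lt_of_abs_lt hn
  have h9 := hkey n
  rw [abs_of_nonneg (hnorm_nonneg _)]
  linarith
end

section
/- Let A be a separable C*-algebra whose set of tracial states T(A) is non-empty and weak*-compact, and let ω be a free (non-principal) ultrafilter on ℕ. Then there exists a sequence (e_n) of positive contractions in A such that for every norm-bounded sequence (x_n) in A one has lim_{n→ω} ‖e_n x_n − x_n‖_{2,T(A)} = 0 and lim_{n→ω} ‖x_n e_n − x_n‖_{2,T(A)} = 0. (This is a representative-sequence formulation of the statement that the uniform tracial ultrapower A^ω is unital when T(A) is compact.) -/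
open scoped ComplexOrder

open Filter Topology

section Aux
variable {A : Type*} [NonUnitalCStarAlgebra A] [PartialOrder A] [StarOrderedRing A]

lemma tau_pos (τ : WeakDual ℂ A) (hpos : ∀ a : A, 0 ≤ τ (star a * a))
    {p : A} (hp : 0 ≤ p) : 0 ≤ τ p := by
  rw [StarOrderedRing.nonneg_iff] at hp
  induction hp using AddSubmonoid.closure_induction with
  | mem x hx => obtain ⟨s, rfl⟩ := hx; exact hpos s
  | zero => simp
  | add x y _ _ hx hy => rw [map_add]; exact add_nonneg hx hy

lemma tau_mono (τ : WeakDual ℂ A) (hpos : ∀ a : A, 0 ≤ τ (star a * a))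
    {a b : A} (h : a ≤ b) : (τ a).re ≤ (τ b).re := by
  have h0 : 0 ≤ τ (b - a) := tau_pos τ hpos (sub_nonneg.mpr h)
  rw [map_sub] at h0
  have := (Complex.le_def.mp h0).1
  simpa [Complex.sub_re] using this

lemma tau_norm_le (τ : WeakDual ℂ A) (hn : ‖WeakDual.toStrongDual τ‖ = 1) (a : A) :
    ‖τ a‖ ≤ ‖a‖ := by
  have := (WeakDual.toStrongDual τ).le_opNorm a
  rwa [hn, one_mul, WeakDual.toStrongDual_apply] at this

lemma tau_expand (τ : WeakDual ℂ A) (x y : A) (a b : ℂ) :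
    τ (star (a • x + b • y) * (a • x + b • y)) =
      (starRingEnd ℂ) a * a * τ (star x * x) + (starRingEnd ℂ) a * b * τ (star x * y)
        + (starRingEnd ℂ) b * a * τ (star y * x) + (starRingEnd ℂ) b * b * τ (star y * y) := by
  simp only [star_add, star_smul, add_mul, mul_add, smul_mul_assoc, mul_smul_comm,
    map_add, map_smul, smul_smul, Complex.star_def, smul_eq_mul]
  ring

lemma tau_herm (τ : WeakDual ℂ A) (hpos : ∀ a : A, 0 ≤ τ (star a * a)) (x y : A) :
    τ (star y * x) = (starRingEnd ℂ) (τ (star x * y)) := by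
  have him : ∀ a : A, (τ (star a * a)).im = 0 := fun a => ((Complex.le_def.mp (hpos a)).2).symm
  have e1 : (τ (star x * y)).im + (τ (star y * x)).im = 0 := by
    have h := him ((1 : ℂ) • x + (1 : ℂ) • y)
    rw [tau_expand τ x y 1 1] at h
    simp only [map_one, one_mul, Complex.add_im, him x, him y] at h
    linarith
  have e2 : (τ (star x * y)).re = (τ (star y * x)).re := by
    have h := him ((1 : ℂ) • x + Complex.I • y)
    rw [tau_expand τ x y 1 Complex.I] at h
    simp only [map_one, one_mul, mul_one, Complex.conj_I, neg_mul, Complex.I_mul_I,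
      Complex.add_im, Complex.neg_im, Complex.mul_im, Complex.I_re, Complex.I_im,
      Complex.one_re, Complex.one_im, him x, him y] at h
    ring_nf at h
    linarith
  apply Complex.ext
  · simpa using e2.symm
  · simp only [Complex.conj_im]; linarith

lemma tau_cs (τ : WeakDual ℂ A) (hpos : ∀ a : A, 0 ≤ τ (star a * a)) (x y : A) :
    ‖τ (star x * y)‖ ^ 2 ≤ (τ (star x * x)).re * (τ (star y * y)).re := by
  by_cases hB : τ (star x * y) = 0
  · simp only [hB, norm_zero, ne_eq, OfNat.ofNat_ne_zero, not_false_eq_true, zero_pow]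
    exact mul_nonneg (Complex.le_def.mp (hpos x)).1 (Complex.le_def.mp (hpos y)).1
  set B := τ (star x * y) with hBdef
  set c : ℂ := (starRingEnd ℂ) B / (‖B‖ : ℂ) with hc
  have hBnorm : (‖B‖ : ℂ) ≠ 0 := by simpa using norm_ne_zero_iff.mpr hB
  have hcB : c * B = (‖B‖ : ℂ) := by
    rw [hc, div_mul_eq_mul_div, Complex.conj_mul', div_eq_iff hBnorm]
    norm_cast; ring
  have hconj : (starRingEnd ℂ) c * (starRingEnd ℂ) B = (‖B‖ : ℂ) := by
    rw [← map_mul, hcB, Complex.conj_ofReal]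
  have hcc : (starRingEnd ℂ) c * c = 1 := by
    have h1 : ((starRingEnd ℂ) c * c) * (B * (starRingEnd ℂ) B)
        = (‖B‖ : ℂ) * (‖B‖ : ℂ) := by
      calc ((starRingEnd ℂ) c * c) * (B * (starRingEnd ℂ) B)
          = (c * B) * ((starRingEnd ℂ) c * (starRingEnd ℂ) B) := by ring
        _ = (‖B‖ : ℂ) * (‖B‖ : ℂ) := by rw [hcB, hconj]
    have h2 : B * (starRingEnd ℂ) B = (‖B‖ : ℂ) * (‖B‖ : ℂ) := by
      rw [Complex.mul_conj']
      norm_cast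
      rw [sq]
    rw [h2] at h1
    exact mul_right_cancel₀ (mul_ne_zero hBnorm hBnorm) (by rw [h1, one_mul])
  have key : ∀ t : ℝ, 0 ≤ (τ (star x * x)).re * (t * t)
      + (2 * ‖B‖) * t + (τ (star y * y)).re := by
    intro t
    have hp := hpos ((t : ℂ) • x + c • y)
    rw [tau_expand τ x y (t : ℂ) c, tau_herm τ hpos x y] at hp
    have hsum : (starRingEnd ℂ) (t : ℂ) * (t : ℂ) * τ (star x * x)
        + (starRingEnd ℂ) (t : ℂ) * c * B + (starRingEnd ℂ) c * (t : ℂ) * (starRingEnd ℂ) B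
        + (starRingEnd ℂ) c * c * τ (star y * y)
        = (t : ℂ) * (t : ℂ) * τ (star x * x) + 2 * (t : ℂ) * (‖B‖ : ℂ) + τ (star y * y) := by
      rw [Complex.conj_ofReal]
      linear_combination (t : ℂ) * hcB + (t : ℂ) * hconj + τ (star y * y) * hcc
    rw [hsum] at hp
    have hre := (Complex.le_def.mp hp).1
    have him : ∀ a : A, (τ (star a * a)).im = 0 := fun a => ((Complex.le_def.mp (hpos a)).2).symm
    simp only [Complex.zero_re, Complex.add_re, Complex.mul_re, Complex.ofReal_re,
      Complex.ofReal_im, Complex.re_ofNat, Complex.im_ofNat, him x, him y,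
      mul_zero, zero_mul, sub_zero, zero_sub, add_zero, zero_add] at hre
    nlinarith [hre]
  have hd := discrim_le_zero key
  rw [discrim] at hd
  nlinarith [norm_nonneg B]

lemma tendsto_conj_approxUnit (m : A) :
    Tendsto (fun u : A => u * (m * u)) (CStarAlgebra.approximateUnit A) (𝓝 m) := by
  set l := CStarAlgebra.approximateUnit A
  have hl := CStarAlgebra.increasingApproximateUnit A
  have h1 : Tendsto (fun u : A => u * m) l (𝓝 m) := hl.tendsto_mul_right m
  have h2 : Tendsto (fun u : A => m * u) l (𝓝 m) := hl.tendsto_mul_left m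
  rw [tendsto_iff_norm_sub_tendsto_zero]
  have hg : Tendsto (fun u : A => ‖m * u - m‖ + ‖u * m - m‖) l (𝓝 0) := by
    have := (tendsto_iff_norm_sub_tendsto_zero.mp h2).add
      (tendsto_iff_norm_sub_tendsto_zero.mp h1)
    simpa using this
  refine squeeze_zero_norm' ?_ hg
  filter_upwards [hl.eventually_norm] with u hu1
  rw [norm_norm]
  calc ‖u * (m * u) - m‖ = ‖u * (m * u - m) + (u * m - m)‖ := by
        congr 1
        simp only [mul_sub]
        abel
    _ ≤ ‖u * (m * u - m)‖ + ‖u * m - m‖ := norm_add_le _ _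
    _ ≤ ‖u‖ * ‖m * u - m‖ + ‖u * m - m‖ := by gcongr; exact norm_mul_le _ _
    _ ≤ ‖m * u - m‖ + ‖u * m - m‖ := by
        gcongr
        exact mul_le_of_le_one_left (norm_nonneg _) hu1

open Unitization in
lemma mul_self_le_self' {e : A} (he : 0 ≤ e) (he1 : ‖e‖ ≤ 1) : e * e ≤ e := by
  have hsa : IsSelfAdjoint e := he.isSelfAdjoint
  have hsa2 : IsSelfAdjoint (e * e) := by
    rw [IsSelfAdjoint, star_mul, hsa.star_eq]
  rw [← inr_le_iff (e * e) e hsa2 hsa, inr_mul]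
  set E : Unitization ℂ A := (e : Unitization ℂ A) with hE
  have hE0 : 0 ≤ E := inr_nonneg_iff.mpr he
  have hE1 : E ≤ 1 := by
    rw [← CStarAlgebra.norm_le_one_iff_of_nonneg E hE0]
    rwa [hE, norm_inr]
  set s : Unitization ℂ A := CFC.sqrt E with hs
  have hs0 : 0 ≤ s := CFC.sqrt_nonneg E
  have hss : s * s = E := CFC.sqrt_mul_sqrt_self E hE0
  have := star_left_conjugate_le_conjugate hE1 s
  rw [mul_one, hs0.star_eq] at this
  calc E * E = s * E * s := by rw [← hss]; noncomm_ring
    _ ≤ s * s := this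
    _ = E := hss

open Unitization in
lemma conj_ineq {e u y : A} (he : IsSelfAdjoint e) (hu : IsSelfAdjoint u) (hy : 0 ≤ y) :
    u * ((y - e * y - y * e + e * (y * e)) * u) ≤
      ‖y‖ • (u * u) - (2 * ‖y‖) • (u * (e * u)) + ‖y‖ • (u * (e * (e * u))) := by
  have hysa : IsSelfAdjoint y := hy.isSelfAdjoint
  have hrsa : IsSelfAdjoint (y - e * y - y * e + e * (y * e)) := by
    simp only [IsSelfAdjoint, star_add, star_sub, star_mul, he.star_eq, hysa.star_eq]
    rw [mul_assoc]
    abel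
  have hLsa : IsSelfAdjoint (u * ((y - e * y - y * e + e * (y * e)) * u)) := by
    simp only [IsSelfAdjoint, star_mul, hu.star_eq, hrsa.star_eq, mul_assoc]
  have hRsa : IsSelfAdjoint (‖y‖ • (u * u) - (2 * ‖y‖) • (u * (e * u))
      + ‖y‖ • (u * (e * (e * u)))) := by
    simp only [IsSelfAdjoint, star_add, star_sub, star_smul, star_mul, star_trivial,
      he.star_eq, hu.star_eq, mul_assoc]
  rw [← inr_le_iff _ _ hLsa hRsa]
  simp only [inr_mul, inr_sub, inr_add, inr_smul]
  set E : Unitization ℂ A := (e : Unitization ℂ A)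
  set U : Unitization ℂ A := (u : Unitization ℂ A)
  set Y : Unitization ℂ A := (y : Unitization ℂ A)
  have hYsa : IsSelfAdjoint Y := (isSelfAdjoint_inr (R := ℂ)).mpr hysa
  have hEsa : IsSelfAdjoint E := (isSelfAdjoint_inr (R := ℂ)).mpr he
  have hUsa : IsSelfAdjoint U := (isSelfAdjoint_inr (R := ℂ)).mpr hu
  have hYle : Y ≤ algebraMap ℝ (Unitization ℂ A) ‖y‖ := by
    have := hYsa.le_algebraMap_norm_self
    rwa [show ‖Y‖ = ‖y‖ from norm_inr y] at this
  have hconj := star_left_conjugate_le_conjugate hYle ((1 - E) * U)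
  have hstar : star ((1 - E) * U) = U * (1 - E) := by
    rw [star_mul, hUsa.star_eq, star_sub, star_one, hEsa.star_eq]
  rw [hstar] at hconj
  calc U * ((Y - E * Y - Y * E + E * (Y * E)) * U)
      = U * (1 - E) * Y * ((1 - E) * U) := by noncomm_ring
    _ ≤ U * (1 - E) * algebraMap ℝ (Unitization ℂ A) ‖y‖ * ((1 - E) * U) := hconj
    _ = ‖y‖ • (U * U) - (2 * ‖y‖) • (U * (E * U)) + ‖y‖ • (U * (E * (E * U))) := by
        rw [Algebra.algebraMap_eq_smul_one]
        rw [show U * (1 - E) * (‖y‖ • (1 : Unitization ℂ A)) * ((1 - E) * U)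
          = ‖y‖ • (U * (1 - E) * ((1 - E) * U)) by
            simp only [mul_smul_comm, smul_mul_assoc, mul_one]]
        have hexp : U * (1 - E) * ((1 - E) * U)
            = U * U - U * (E * U) - U * (E * U) + U * (E * (E * U)) := by noncomm_ring
        rw [hexp]
        module

lemma tau_re_smul (τ : WeakDual ℂ A) (t : ℝ) (a : A) : (τ (t • a)).re = t * (τ a).re := by
  rw [← Complex.coe_smul, map_smul, smul_eq_mul, Complex.re_ofReal_mul]

lemma main_est (τ : WeakDual ℂ A) (hτ : τ ∈ tracialStates A) {e y : A}
    (he : 0 ≤ e) (he1 : ‖e‖ ≤ 1) (hy : 0 ≤ y) :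
    (τ (y - e * y - y * e + e * (y * e))).re ≤ ‖y‖ * (1 - (τ e).re) := by
  obtain ⟨hn, hpos, htr⟩ := hτ
  set l := CStarAlgebra.approximateUnit A with hldef
  have hl := CStarAlgebra.increasingApproximateUnit A
  haveI : l.NeBot := hl.neBot
  have hcont : Continuous fun a : A => τ a := (WeakDual.toStrongDual τ).continuous
  set r := y - e * y - y * e + e * (y * e) with hr
  have limA : Tendsto (fun u : A => (τ (u * (r * u))).re) l (𝓝 ((τ r).re)) :=
    (Complex.continuous_re.tendsto _).comp
      ((hcont.tendsto r).comp (tendsto_conj_approxUnit r))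
  have lim2 : Tendsto (fun u : A => (τ (u * (e * u))).re) l (𝓝 ((τ e).re)) :=
    (Complex.continuous_re.tendsto _).comp
      ((hcont.tendsto e).comp (tendsto_conj_approxUnit e))
  have lim3 : Tendsto (fun u : A => (τ (u * (e * (e * u)))).re) l (𝓝 ((τ (e * e)).re)) := by
    have := (Complex.continuous_re.tendsto _).comp
      ((hcont.tendsto (e * e)).comp (tendsto_conj_approxUnit (e * e)))
    refine this.congr fun u => ?_
    simp only [Function.comp_apply, mul_assoc]
  have limB : Tendsto (fun u : A => ‖y‖ * (1 - 2 * (τ (u * (e * u))).re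
      + (τ (u * (e * (e * u)))).re)) l
      (𝓝 (‖y‖ * (1 - 2 * (τ e).re + (τ (e * e)).re))) :=
    (((tendsto_const_nhds.sub (lim2.const_mul 2)).add lim3).const_mul ‖y‖)
  have hev : ∀ᶠ u in l, (τ (u * (r * u))).re ≤ ‖y‖ * (1 - 2 * (τ (u * (e * u))).re
      + (τ (u * (e * (e * u)))).re) := by
    filter_upwards [hl.eventually_nonneg, hl.eventually_norm] with u hu0 hu1
    have hkey := conj_ineq he.isSelfAdjoint hu0.isSelfAdjoint hy (e := e) (u := u)
    have hmono := tau_mono τ hpos hkey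
    rw [← hr] at hmono
    have hre : (τ (‖y‖ • (u * u) - (2 * ‖y‖) • (u * (e * u))
        + ‖y‖ • (u * (e * (e * u))))).re
        = ‖y‖ * (τ (u * u)).re - (2 * ‖y‖) * (τ (u * (e * u))).re
          + ‖y‖ * (τ (u * (e * (e * u)))).re := by
      rw [map_add, map_sub, Complex.add_re, Complex.sub_re,
        tau_re_smul, tau_re_smul, tau_re_smul]
    rw [hre] at hmono
    have huu : (τ (u * u)).re ≤ 1 := by
      have h1 : ‖τ (u * u)‖ ≤ ‖u * u‖ := tau_norm_le τ hn _
      have h2 : ‖u * u‖ ≤ ‖u‖ * ‖u‖ := norm_mul_le _ _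
      have h3 : (τ (u * u)).re ≤ ‖τ (u * u)‖ := by
        exact Complex.re_le_norm _
      nlinarith [norm_nonneg u]
    nlinarith [norm_nonneg y, hmono]
  have hfinal := le_of_tendsto_of_tendsto limA limB hev
  have hee : (τ (e * e)).re ≤ (τ e).re := tau_mono τ hpos (mul_self_le_self' he he1)
  nlinarith [norm_nonneg y]

lemma finset_ub {ι : Type*} (f : ι → A) (t : Finset ι)
    (hf : ∀ i ∈ t, 0 ≤ f i ∧ ‖f i‖ < 1) :
    ∃ u : A, 0 ≤ u ∧ ‖u‖ < 1 ∧ ∀ i ∈ t, f i ≤ u := by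
  classical
  induction t using Finset.cons_induction with
  | empty => exact ⟨0, le_refl 0, by simp, by simp⟩
  | cons a s ha ih =>
    obtain ⟨u, hu0, hu1, hub⟩ := ih fun i hi => hf i (Finset.mem_cons_of_mem hi)
    obtain ⟨ha0, ha1⟩ := hf a (Finset.mem_cons_self a s)
    obtain ⟨w, hw, hle1, hle2⟩ := CStarAlgebra.directedOn_nonneg_ball (A := A)
      (f a) ⟨ha0, by simpa [Metric.mem_ball] using ha1⟩
      u ⟨hu0, by simpa [Metric.mem_ball] using hu1⟩
    refine ⟨w, hw.1, by simpa [Metric.mem_ball] using hw.2, ?_⟩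
    intro i hi
    rcases Finset.mem_cons.mp hi with rfl | hi
    · exact hle1
    · exact (hub i hi).trans hle2

lemma exists_good (hcpt : IsCompact (tracialStates A)) {ε : ℝ} (hε : 0 < ε) :
    ∃ e : A, 0 ≤ e ∧ ‖e‖ ≤ 1 ∧ ∀ τ ∈ tracialStates A, 1 - ε ≤ (τ e).re := by
  by_cases hε1 : 1 ≤ ε
  · exact ⟨0, le_refl 0, by simp, fun τ _ => by simp; linarith⟩
  push_neg at hε1
  set δ : ℝ := ε / 4 with hδ
  have hδ0 : 0 < δ := by positivity
  have hδ1 : δ < 1 := by linarith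
  have step1 : ∀ τ ∈ tracialStates A, ∃ v : A, 0 ≤ v ∧ ‖v‖ < 1 ∧ 1 - ε < (τ v).re := by
    rintro τ ⟨hn, hpos, htr⟩
    have hex : ∃ a : A, ‖a‖ ≤ 1 ∧ 1 - δ < ‖τ a‖ := by
      by_contra h
      push_neg at h
      have hb : ‖WeakDual.toStrongDual τ‖ ≤ 1 - δ := by
        apply ContinuousLinearMap.opNorm_le_bound _ (by linarith)
        intro b
        rcases eq_or_ne b 0 with rfl | hb0
        · simp
        · have hnb : (0:ℝ) < ‖b‖ := norm_pos_iff.mpr hb0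
          have h1 : ‖τ (‖b‖⁻¹ • b)‖ ≤ 1 - δ := by
            refine h _ ?_
            rw [norm_smul, norm_inv, norm_norm, inv_mul_cancel₀ hnb.ne']
          rw [← Complex.coe_smul, map_smul, smul_eq_mul, norm_mul,
            Complex.norm_real, Real.norm_eq_abs, abs_of_pos (by positivity)] at h1
          rw [WeakDual.toStrongDual_apply]
          calc ‖τ b‖ = ‖b‖ * (‖b‖⁻¹ * ‖τ b‖) := by field_simp
            _ ≤ (1 - δ) * ‖b‖ := by
                rw [mul_comm]
                exact mul_le_mul_of_nonneg_right h1 hnb.le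
      rw [hn] at hb
      linarith
    obtain ⟨a, ha1, ha2⟩ := hex
    set l := CStarAlgebra.approximateUnit A
    have hl := CStarAlgebra.increasingApproximateUnit A
    haveI : l.NeBot := hl.neBot
    have hcont : Continuous fun c : A => τ c := (WeakDual.toStrongDual τ).continuous
    have hlim : Tendsto (fun u : A => ‖τ (u * a)‖) l (𝓝 ‖τ a‖) :=
      (continuous_norm.tendsto _).comp ((hcont.tendsto a).comp (hl.tendsto_mul_right a))
    have hev : ∀ᶠ u in l, 1 - δ < ‖τ (u * a)‖ :=
      hlim.eventually (eventually_gt_nhds ha2)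
    obtain ⟨u, hu0, hu1, huτ⟩ : ∃ u : A, 0 ≤ u ∧ ‖u‖ ≤ 1 ∧ 1 - δ < ‖τ (u * a)‖ := by
      have := (hl.eventually_nonneg.and (hl.eventually_norm.and hev)).exists
      obtain ⟨u, h1, h2, h3⟩ := this
      exact ⟨u, h1, h2, h3⟩
    have hcs := tau_cs τ hpos u a
    rw [hu0.isSelfAdjoint.star_eq] at hcs
    have haa : (τ (star a * a)).re ≤ 1 := by
      have h1 : ‖τ (star a * a)‖ ≤ ‖star a * a‖ := tau_norm_le τ hn _
      have h2 : ‖star a * a‖ ≤ ‖star a‖ * ‖a‖ := norm_mul_le _ _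
      have h3 : (τ (star a * a)).re ≤ ‖τ (star a * a)‖ := by
        exact Complex.re_le_norm _
      rw [norm_star] at h2
      nlinarith [norm_nonneg a]
    have haa0 : 0 ≤ (τ (star a * a)).re := (Complex.le_def.mp (hpos a)).1
    have huu0 : 0 ≤ (τ (u * u)).re := by
      have := (Complex.le_def.mp (hpos u)).1
      rwa [hu0.isSelfAdjoint.star_eq] at this
    have huu : (1 - δ) ^ 2 < (τ (u * u)).re := by
      nlinarith [norm_nonneg (τ (u * a))]
    refine ⟨(1 - δ) • (u * u), ?_, ?_, ?_⟩
    · have : (0:A) ≤ u * u := by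
        have := star_mul_self_nonneg u
        rwa [hu0.isSelfAdjoint.star_eq] at this
      exact smul_nonneg (by linarith) this
    · rw [norm_smul, Real.norm_eq_abs, abs_of_pos (by linarith)]
      have h2 : ‖u * u‖ ≤ ‖u‖ * ‖u‖ := norm_mul_le _ _
      nlinarith [norm_nonneg u, norm_nonneg (u * u),
        mul_le_mul_of_nonneg_left h2 (show (0:ℝ) ≤ 1 - δ by linarith),
        mul_le_mul hu1 hu1 (norm_nonneg u) zero_le_one]
    · have : (τ ((1 - δ) • (u * u))).re = (1 - δ) * (τ (u * u)).re := by
        rw [← Complex.coe_smul, map_smul, smul_eq_mul, Complex.re_ofReal_mul]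
      rw [this]
      nlinarith [mul_lt_mul_of_pos_left huu (show (0:ℝ) < 1 - δ by linarith), sq_nonneg δ,
        sq_nonneg (1 - δ)]
  classical
  choose! v hv0 hv1 hv2 using step1
  set U : A → Set (WeakDual ℂ A) := fun w => {σ | 1 - ε < (σ w).re} with hU
  have hUopen : ∀ w, IsOpen (U w) := fun w =>
    isOpen_Ioi.preimage (Complex.continuous_re.comp (WeakDual.eval_continuous w))
  have hcover : tracialStates A ⊆ ⋃ τ ∈ tracialStates A, U (v τ) := by
    intro σ hσ
    exact Set.mem_biUnion hσ (hv2 σ hσ)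
  obtain ⟨t, hts, htfin, htsub⟩ :=
    hcpt.elim_finite_subcover_image (fun τ _ => hUopen (v τ)) hcover
  have : ∃ u : A, 0 ≤ u ∧ ‖u‖ < 1 ∧ ∀ i ∈ htfin.toFinset, v i ≤ u := by
    apply finset_ub
    intro i hi
    have hit : i ∈ t := by simpa using hi
    exact ⟨hv0 i (hts hit), hv1 i (hts hit)⟩
  obtain ⟨u, hu0, hu1, hub⟩ := this
  refine ⟨u, hu0, hu1.le, ?_⟩
  intro σ hσ
  have hmem := htsub hσ
  simp only [Set.mem_iUnion, exists_prop] at hmem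
  obtain ⟨i, hit, hσU⟩ := hmem
  have h1 : 1 - ε < (σ (v i)).re := hσU
  have h2 : (σ (v i)).re ≤ (σ u).re :=
    tau_mono σ hσ.2.1 (hub i (by simpa using hit))
  linarith

end Aux

/-- Let `A` be a separable C⋆-algebra with `T(A)` non-empty and weak-*-compact,
and let `ω` be a free ultrafilter on `ℕ`. Then there is a sequence `(e n)` of positive
contractions in `A` such that for every norm-bounded sequence `(x n)` in `A`,
`lim_{n→ω} ‖e n * x n - x n‖_{2,T(A)} = 0` and `lim_{n→ω} ‖x n * e n - x n‖_{2,T(A)} = 0`.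
(The uniform tracial ultrapower `A^ω` is unital when `T(A)` is compact.) -/
theorem stmt3 (A : Type*) [NonUnitalCStarAlgebra A] [TopologicalSpace.SeparableSpace A]
    [PartialOrder A] [StarOrderedRing A]
    (hTA : (tracialStates A).Nonempty) (hcpt : IsCompact (tracialStates A))
    (ω : Ultrafilter ℕ) (hω : (ω : Filter ℕ) ≤ Filter.cofinite) :
    ∃ e : ℕ → A, (∀ n, 0 ≤ e n ∧ ‖e n‖ ≤ 1) ∧
      ∀ x : ℕ → A, (∃ C : ℝ, ∀ n, ‖x n‖ ≤ C) →
        Filter.Tendsto (fun n => uniformTracialSeminorm A (e n * x n - x n))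
          (ω : Filter ℕ) (nhds 0) ∧
        Filter.Tendsto (fun n => uniformTracialSeminorm A (x n * e n - x n))
          (ω : Filter ℕ) (nhds 0) := by
  have hkey : ∀ n : ℕ, ∃ e : A, 0 ≤ e ∧ ‖e‖ ≤ 1 ∧
      ∀ τ ∈ tracialStates A, 1 - 1/(n+1 : ℝ) ≤ (τ e).re :=
    fun n => exists_good hcpt (by positivity)
  choose e he0 he1 he2 using hkey
  refine ⟨e, fun n => ⟨he0 n, he1 n⟩, ?_⟩
  rintro x ⟨C, hC⟩
  set C' : ℝ := max C 0 with hC'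
  have hC'0 : (0:ℝ) ≤ C' := le_max_right _ _
  have hCx : ∀ n, ‖x n‖ ≤ C' := fun n => (hC n).trans (le_max_left _ _)
  haveI : Nonempty (tracialStates A) := hTA.to_subtype
  have key : ∀ (n : ℕ) (z : A), (∀ τ ∈ tracialStates A,
      ((τ : WeakDual ℂ A) (star z * z)).re ≤ C' ^ 2 * (1/(n+1 : ℝ))) →
      uniformTracialSeminorm A z ≤ Real.sqrt (C' ^ 2 * (1/(n+1 : ℝ))) := by
    intro n z hz
    refine ciSup_le fun τ => ?_
    exact Real.sqrt_le_sqrt (hz τ.1 τ.2)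
  have hbnd : ∀ (n : ℕ) (y : A), 0 ≤ y → ‖y‖ ≤ C' ^ 2 → ∀ τ ∈ tracialStates A,
      ((τ : WeakDual ℂ A) (y - e n * y - y * e n + e n * (y * e n))).re
        ≤ C' ^ 2 * (1/(n+1 : ℝ)) := by
    intro n y hy hny τ hτ
    have h1 := main_est τ hτ (he0 n) (he1 n) hy
    have h2 : 1 - (τ (e n)).re ≤ 1/(n+1 : ℝ) := by
      have := he2 n τ hτ; linarith
    have h3 : 0 ≤ 1 - (τ (e n)).re := by
      have ha : ‖τ (e n)‖ ≤ ‖e n‖ := tau_norm_le τ hτ.1 _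
      have hb : (τ (e n)).re ≤ ‖τ (e n)‖ := by
        exact Complex.re_le_norm _
      have := he1 n; linarith
    calc (τ (y - e n * y - y * e n + e n * (y * e n))).re
        ≤ ‖y‖ * (1 - (τ (e n)).re) := h1
      _ ≤ C' ^ 2 * (1/(n+1 : ℝ)) := mul_le_mul hny h2 h3 (by positivity)
  have hg : Filter.Tendsto (fun n : ℕ => Real.sqrt (C' ^ 2 * (1/(n+1 : ℝ))))
      (ω : Filter ℕ) (nhds 0) := by
    have h0 : Filter.Tendsto (fun n : ℕ => C' ^ 2 * (1/(n+1 : ℝ)))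
        Filter.atTop (nhds 0) := by
      have := tendsto_one_div_add_atTop_nhds_zero_nat (𝕜 := ℝ)
      simpa using this.const_mul (C' ^ 2)
    have h1 : Filter.Tendsto (fun n : ℕ => Real.sqrt (C' ^ 2 * (1/(n+1 : ℝ))))
        Filter.atTop (nhds 0) := by
      have := (Real.continuous_sqrt.tendsto 0).comp h0
      simpa [Function.comp_def] using this
    exact h1.mono_left (by rwa [← Nat.cofinite_eq_atTop])
  have hysq : ∀ n : ℕ, ‖x n * star (x n)‖ ≤ C' ^ 2 := by
    intro n
    calc ‖x n * star (x n)‖ ≤ ‖x n‖ * ‖star (x n)‖ := norm_mul_le _ _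
      _ = ‖x n‖ * ‖x n‖ := by rw [norm_star]
      _ ≤ C' * C' := mul_le_mul (hCx n) (hCx n) (norm_nonneg _) hC'0
      _ = C' ^ 2 := (sq C').symm
  have hysq' : ∀ n : ℕ, ‖star (x n) * x n‖ ≤ C' ^ 2 := by
    intro n
    calc ‖star (x n) * x n‖ ≤ ‖star (x n)‖ * ‖x n‖ := norm_mul_le _ _
      _ = ‖x n‖ * ‖x n‖ := by rw [norm_star]
      _ ≤ C' * C' := mul_le_mul (hCx n) (hCx n) (norm_nonneg _) hC'0
      _ = C' ^ 2 := (sq C').symm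
  constructor
  · apply squeeze_zero (g := fun n : ℕ => Real.sqrt (C' ^ 2 * (1/(n+1 : ℝ))))
      (fun n => Real.iSup_nonneg fun τ => Real.sqrt_nonneg _) _ hg
    intro n
    apply key
    intro τ hτ
    obtain ⟨hn, hpos, htr⟩ := hτ
    set z := e n * x n - x n with hzdef
    have hflip : τ (star z * z) = τ (z * star z) := htr _ _
    have hz : z * star z = (x n * star (x n)) - e n * (x n * star (x n))
        - (x n * star (x n)) * e n + e n * ((x n * star (x n)) * e n) := by
      rw [hzdef, star_sub, star_mul, (he0 n).isSelfAdjoint.star_eq]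
      noncomm_ring
    rw [hflip, hz]
    exact hbnd n _ (mul_star_self_nonneg (x n)) (hysq n) τ ⟨hn, hpos, htr⟩
  · apply squeeze_zero (g := fun n : ℕ => Real.sqrt (C' ^ 2 * (1/(n+1 : ℝ))))
      (fun n => Real.iSup_nonneg fun τ => Real.sqrt_nonneg _) _ hg
    intro n
    apply key
    intro τ hτ
    set z := x n * e n - x n with hzdef
    have hz : star z * z = (star (x n) * x n) - e n * (star (x n) * x n)
        - (star (x n) * x n) * e n + e n * ((star (x n) * x n) * e n) := by
      rw [hzdef, star_sub, star_mul, (he0 n).isSelfAdjoint.star_eq]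
      noncomm_ring
    rw [hz]
    exact hbnd n _ (star_mul_self_nonneg (x n)) (hysq' n) τ hτ
end

section
/- Let A be a separable C*-algebra with T(A) non-empty, and let ω be a free (non-principal) ultrafilter on ℕ. Suppose there exists a sequence (e_n) of positive contractions in A such that lim_{n→ω} γ_n = 1, where γ_n := inf_{τ∈T(A)} τ(e_n). Then T(A) is weak*-compact; more precisely, T(A) is weak*-closed in the closed unit ball of the continuous dual of A, and hence compact by the Banach–Alaoglu theorem. (This is the content of the converse direction of the statement that the uniform tracial ultrapower A^ω is unital if and only if T(A) is compact.) -/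
open scoped ComplexOrder

/-- A tracial state (indeed any functional nonnegative on elements `star a * a`) is nonnegative
on all positive elements. -/
lemma tracialStates.pos_of_pos (A : Type*) [NonUnitalCStarAlgebra A]
    [PartialOrder A] [StarOrderedRing A] (τ : WeakDual ℂ A)
    (hτ : ∀ a : A, 0 ≤ τ (star a * a)) {a : A} (ha : 0 ≤ a) : 0 ≤ τ a := by
  rw [StarOrderedRing.nonneg_iff] at ha
  induction ha using AddSubmonoid.closure_induction with
  | mem x hx => obtain ⟨s, rfl⟩ := hx; exact hτ s
  | zero => simp
  | add x y _ _ hx hy => rw [map_add]; exact add_nonneg hx hy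

/-- Let `A` be a separable C⋆-algebra with `T(A) ≠ ∅` and `ω` a free
ultrafilter on `ℕ`. If there is a sequence `(e n)` of positive contractions in `A` with
`lim_{n→ω} γ n = 1`, where `γ n = inf_{τ ∈ T(A)} τ(e n)`, then `T(A)` is weak-*-compact;
more precisely `T(A)` is weak-*-closed (hence closed in the unit ball of the dual), and
compact by Banach–Alaoglu. -/
theorem stmt4 (A : Type*) [NonUnitalCStarAlgebra A] [TopologicalSpace.SeparableSpace A]
    [PartialOrder A] [StarOrderedRing A]
    (hTA : (tracialStates A).Nonempty)
    (ω : Ultrafilter ℕ) (hω : (ω : Filter ℕ) ≤ Filter.cofinite)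
    (e : ℕ → A) (he : ∀ n, 0 ≤ e n ∧ ‖e n‖ ≤ 1)
    (hlim : Filter.Tendsto
      (fun n => ⨅ τ : tracialStates A, ((τ : WeakDual ℂ A) (e n)).re)
      (ω : Filter ℕ) (nhds 1)) :
    IsClosed (tracialStates A) ∧ IsCompact (tracialStates A) := by
  set γ : ℕ → ℝ := fun n => ⨅ τ : tracialStates A, ((τ : WeakDual ℂ A) (e n)).re with hγ
  haveI : Nonempty (tracialStates A) := hTA.to_subtype
  -- the key alternative description of `tracialStates A` as a closed set
  have key : tracialStates A = {τ : WeakDual ℂ A |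
      (∀ a : A, ‖τ a‖ ≤ ‖a‖) ∧ (∀ a : A, 0 ≤ τ (star a * a)) ∧
      (∀ a b : A, τ (a * b) = τ (b * a)) ∧ ∀ n, γ n ≤ (τ (e n)).re} := by
    apply Set.Subset.antisymm
    · rintro τ ⟨hn, hp, ht⟩
      refine ⟨fun a => ?_, hp, ht, fun n => ?_⟩
      · calc ‖τ a‖ ≤ ‖WeakDual.toStrongDual τ‖ * ‖a‖ :=
              (WeakDual.toStrongDual τ).le_opNorm a
          _ = ‖a‖ := by rw [hn, one_mul]
      · refine ciInf_le ⟨0, ?_⟩ (⟨τ, hn, hp, ht⟩ : tracialStates A)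
        rintro x ⟨σ, rfl⟩
        exact (Complex.le_def.mp
          (tracialStates.pos_of_pos A σ σ.2.2.1 (he n).1)).1
    · rintro τ ⟨hb, hp, ht, hγle⟩
      have hle : ‖WeakDual.toStrongDual τ‖ ≤ 1 :=
        ContinuousLinearMap.opNorm_le_bound _ zero_le_one (by simpa using hb)
      have hge : ∀ n, γ n ≤ ‖WeakDual.toStrongDual τ‖ := by
        intro n
        calc γ n ≤ (τ (e n)).re := hγle n
          _ ≤ ‖τ (e n)‖ := Complex.re_le_norm _
          _ ≤ ‖WeakDual.toStrongDual τ‖ * ‖e n‖ :=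
              (WeakDual.toStrongDual τ).le_opNorm _
          _ ≤ ‖WeakDual.toStrongDual τ‖ * 1 := by
              exact mul_le_mul_of_nonneg_left (he n).2 (norm_nonneg _)
          _ = ‖WeakDual.toStrongDual τ‖ := mul_one _
      have h1 : (1 : ℝ) ≤ ‖WeakDual.toStrongDual τ‖ :=
        le_of_tendsto hlim (Filter.Eventually.of_forall hge)
      exact ⟨le_antisymm hle h1, hp, ht⟩
  have hcont : ∀ a : A, Continuous fun τ : WeakDual ℂ A => τ a :=
    fun a => WeakDual.eval_continuous a
  have hclosed : IsClosed (tracialStates A) := by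
    rw [key]
    have h1 : IsClosed {τ : WeakDual ℂ A | ∀ a : A, ‖τ a‖ ≤ ‖a‖} := by
      have : {τ : WeakDual ℂ A | ∀ a : A, ‖τ a‖ ≤ ‖a‖} =
          ⋂ a : A, {τ : WeakDual ℂ A | ‖τ a‖ ≤ ‖a‖} := by
        ext; simp [Set.mem_iInter]
      rw [this]
      exact isClosed_iInter fun a => isClosed_le ((hcont a).norm) continuous_const
    have h2 : IsClosed {τ : WeakDual ℂ A | ∀ a : A, 0 ≤ τ (star a * a)} := by
      have : {τ : WeakDual ℂ A | ∀ a : A, 0 ≤ τ (star a * a)} =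
          ⋂ a : A, {τ : WeakDual ℂ A | 0 ≤ τ (star a * a)} := by
        ext; simp [Set.mem_iInter]
      rw [this]
      exact isClosed_iInter fun a => isClosed_le continuous_const (hcont _)
    have h3 : IsClosed {τ : WeakDual ℂ A | ∀ a b : A, τ (a * b) = τ (b * a)} := by
      have : {τ : WeakDual ℂ A | ∀ a b : A, τ (a * b) = τ (b * a)} =
          ⋂ a : A, ⋂ b : A, {τ : WeakDual ℂ A | τ (a * b) = τ (b * a)} := by
        ext; simp [Set.mem_iInter]
      rw [this]
      exact isClosed_iInter fun a => isClosed_iInter fun b =>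
        isClosed_eq (hcont _) (hcont _)
    have h4 : IsClosed {τ : WeakDual ℂ A | ∀ n, γ n ≤ (τ (e n)).re} := by
      have : {τ : WeakDual ℂ A | ∀ n, γ n ≤ (τ (e n)).re} =
          ⋂ n, {τ : WeakDual ℂ A | γ n ≤ (τ (e n)).re} := by
        ext; simp [Set.mem_iInter]
      rw [this]
      exact isClosed_iInter fun n =>
        isClosed_le continuous_const (Complex.continuous_re.comp (hcont _))
    simp only [Set.setOf_and]
    exact h1.inter (h2.inter (h3.inter h4))
  refine ⟨hclosed, (WeakDual.isCompact_closedBall (𝕜 := ℂ) (E := A) 0 1).of_isClosed_subset hclosed ?_⟩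
  rintro τ ⟨hn, -⟩
  simp only [Set.mem_preimage, Metric.mem_closedBall, dist_zero_right]
  exact hn.le
end

section
/- Let A be a unital C*-algebra, let τ be a tracial state on A, let n ≥ 1, let ψ : M_n(ℂ) → A be a unital *-homomorphism from the n×n complex matrices to A, and let a ∈ A be an element commuting with every element of the range of ψ. Then for every matrix x ∈ M_n(ℂ), τ(ψ(x)·a) = (Tr(x)/n)·τ(a), where Tr denotes the (unnormalised) matrix trace. In particular, if q_1, …, q_n ∈ M_n(ℂ) are pairwise orthogonal rank-one projections summing to the identity, then τ(ψ(q_i)·a) = τ(a)/n for each i. -/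
open scoped ComplexOrder

open Matrix in
/-- The trace of an idempotent complex matrix equals its rank. -/
private lemma stmt6_trace_eq_rank_of_idem {n : ℕ} (q : Matrix (Fin n) (Fin n) ℂ)
    (hq : q * q = q) : q.trace = (q.rank : ℂ) := by
  have hf : q.mulVecLin ∘ₗ q.mulVecLin = q.mulVecLin := by
    rw [← Matrix.mulVecLin_mul]; exact congrArg _ hq
  have hproj : LinearMap.IsProj (LinearMap.range q.mulVecLin) q.mulVecLin := by
    refine ⟨fun x => LinearMap.mem_range_self _ _, ?_⟩
    rintro x ⟨y, rfl⟩
    exact congrFun (congrArg DFunLike.coe hf) y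
  have := hproj.trace
  rw [Matrix.rank, ← this]
  rw [LinearMap.trace_eq_matrix_trace ℂ (Pi.basisFun ℂ (Fin n))]
  congr 1
  ext i j
  simp [LinearMap.toMatrix_apply, Matrix.mulVecLin, Matrix.mulVec, dotProduct, Pi.single_apply]

open Matrix in
/-- A tracial linear functional on `Mₙ(ℂ)` is a multiple of the trace. -/
private lemma stmt6_tracial_eq {n : ℕ} (hn : 1 ≤ n)
    (φ : Matrix (Fin n) (Fin n) ℂ →ₗ[ℂ] ℂ)
    (hφ : ∀ x y : Matrix (Fin n) (Fin n) ℂ, φ (x * y) = φ (y * x)) :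
    ∀ x, φ x = (Matrix.trace x / n) * φ 1 := by
  have i0 : Fin n := ⟨0, hn⟩
  have hoff : ∀ i j : Fin n, i ≠ j → φ (single i j 1) = 0 := by
    intro i j hij
    have h1 : single i i (1:ℂ) * single i j 1 = single i j 1 := by
      rw [single_mul_single_same, one_mul]
    have h2 : single i j (1:ℂ) * single i i 1 = 0 :=
      single_mul_single_of_ne 1 i j i hij.symm 1
    rw [← h1, hφ, h2, map_zero]
  have hdiag : ∀ i : Fin n, φ (single i i 1) = φ (single i0 i0 1) := by
    intro i
    have h1 : single i i0 (1:ℂ) * single i0 i 1 = single i i 1 := by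
      rw [single_mul_single_same, one_mul]
    have h2 : single i0 i (1:ℂ) * single i i0 1 = single i0 i0 1 := by
      rw [single_mul_single_same, one_mul]
    rw [← h1, hφ, h2]
  have hsum : (∑ i : Fin n, single i i (1:ℂ)) = 1 := by
    ext i j
    simp only [Matrix.sum_apply, Matrix.single, Matrix.of_apply, Matrix.one_apply]
    rw [Finset.sum_eq_single i]
    · simp
    · intro k _ hk; simp only [ite_eq_right_iff, and_imp]; intro h _; exact absurd h hk
    · intro h; exact absurd (Finset.mem_univ i) h
  have hnn : (n : ℂ) ≠ 0 := Nat.cast_ne_zero.mpr (by omega)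
  have h1 : φ 1 = n * φ (single i0 i0 1) := by
    rw [← hsum, map_sum]
    simp_rw [hdiag]
    simp [mul_comm]
  have hd : ∀ i : Fin n, φ (single i i 1) = φ 1 / n := by
    intro i
    rw [hdiag i, h1]
    field_simp
  intro x
  conv_lhs => rw [matrix_eq_sum_single x]
  rw [map_sum]
  have key : ∀ i : Fin n, ∑ j : Fin n, φ (single i j (x i j)) = x i i * (φ 1 / n) := by
    intro i
    rw [Finset.sum_eq_single i]
    · have h : single i i (x i i) = x i i • single i i (1:ℂ) := by
        rw [smul_single, smul_eq_mul, mul_one]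
      rw [h, _root_.map_smul, hd, smul_eq_mul]
    · intro j _ hj
      have h : single i j (x i j) = x i j • single i j (1:ℂ) := by
        rw [smul_single, smul_eq_mul, mul_one]
      rw [h, _root_.map_smul, hoff i j (Ne.symm hj), smul_zero]
    · intro h; exact absurd (Finset.mem_univ i) h
  have hs : ∀ i : Fin n, φ (∑ j : Fin n, single i j (x i j)) = x i i * (φ 1 / n) := by
    intro i; rw [map_sum]; exact key i
  rw [Finset.sum_congr rfl (fun i _ => hs i), ← Finset.sum_mul, Matrix.trace]
  simp only [Matrix.diag]
  ring

/-- Let `A` be a unital C⋆-algebra, `τ` a tracial state on `A`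
(a linear functional with `τ 1 = 1`, `τ (a* a) ≥ 0`, `τ (ab) = τ (ba)`), `n ≥ 1`,
`ψ : Mₙ(ℂ) → A` a unital *-homomorphism, and `a ∈ A` commuting with the range of `ψ`.
Then `τ (ψ x * a) = (Tr x / n) * τ a` for every matrix `x`; in particular, if
`q 1, …, q n` are pairwise orthogonal rank-one projections summing to `1`, then
`τ (ψ (q i) * a) = τ a / n` for each `i`. -/
theorem stmt6 (A : Type*) [CStarAlgebra A]
    (τ : A →ₗ[ℂ] ℂ) (hτ1 : τ 1 = 1)
    (hτpos : ∀ a : A, 0 ≤ τ (star a * a))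
    (hτtr : ∀ a b : A, τ (a * b) = τ (b * a))
    (n : ℕ) (hn : 1 ≤ n)
    (ψ : Matrix (Fin n) (Fin n) ℂ →⋆ₐ[ℂ] A)
    (a : A) (ha : ∀ x : Matrix (Fin n) (Fin n) ℂ, ψ x * a = a * ψ x) :
    (∀ x : Matrix (Fin n) (Fin n) ℂ, τ (ψ x * a) = (Matrix.trace x / n) * τ a) ∧
    ∀ q : Fin n → Matrix (Fin n) (Fin n) ℂ,
      (∀ i, IsSelfAdjoint (q i)) → (∀ i, q i * q i = q i) →
      (∀ i j, i ≠ j → q i * q j = 0) → (∑ i, q i) = 1 →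
      (∀ i, (q i).rank = 1) →
      ∀ i, τ (ψ (q i) * a) = τ a / n := by
  set φ : Matrix (Fin n) (Fin n) ℂ →ₗ[ℂ] ℂ :=
    { toFun := fun x => τ (ψ x * a)
      map_add' := fun x y => by
        show τ (ψ (x + y) * a) = τ (ψ x * a) + τ (ψ y * a)
        rw [map_add, add_mul, map_add]
      map_smul' := fun c x => by
        show τ (ψ (c • x) * a) = _
        rw [_root_.map_smul, smul_mul_assoc, _root_.map_smul]; rfl } with hφdef
  have hφtr : ∀ x y : Matrix (Fin n) (Fin n) ℂ, φ (x * y) = φ (y * x) := by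
    intro x y
    show τ (ψ (x * y) * a) = τ (ψ (y * x) * a)
    rw [map_mul ψ x y, map_mul ψ y x, mul_assoc, hτtr, mul_assoc, ← ha x, ← mul_assoc]
  have hφ1 : φ 1 = τ a := by
    show τ (ψ 1 * a) = τ a
    rw [_root_.map_one, one_mul]
  have key : ∀ x, τ (ψ x * a) = (Matrix.trace x / n) * τ a := by
    intro x
    have h := stmt6_tracial_eq hn φ hφtr x
    rw [hφ1] at h
    exact h
  refine ⟨key, ?_⟩
  intro q _ hidem _ _ hrank i
  rw [key, stmt6_trace_eq_rank_of_idem _ (hidem i), hrank i, Nat.cast_one]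
  ring
end

section
/- Let A be a unital C*-algebra, let τ be a tracial state on A, let n ≥ 1, let b ∈ A be a positive contraction, and let a ∈ A. For i = 1, …, n define f_i : [0,1] → [0,1] by f_i(t) = min(max(n·t − (i−1), 0), 1) (so f_i vanishes on [0, (i−1)/n], equals 1 on [i/n, 1], and is linear in between), and let f_i(b) ∈ A be defined by continuous functional calculus. Suppose p_1, …, p_n ∈ A are pairwise orthogonal projections (p_i = p_i* = p_i², p_i p_j = 0 for i ≠ j), each commuting with b, such that τ(p_i x) = τ(x)/n for every x in the C*-subalgebra of A generated by {a, b} and every i. Set p := Σ_{i=1}^n p_i f_i(b). Then: (i) p is a positive contraction; (ii) τ(p·a) = τ(b·a) and τ(p) = τ(b); and (iii) τ(p − p²) ≤ 1/n, and consequently τ((p − p²)²) ≤ 1/n. -/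
open scoped ComplexOrder


private lemma clamp_sum (n : ℕ) (s : ℝ) :
    ∑ i : Fin n, min (max (s - ((i : ℕ) : ℝ)) 0) 1 = min (max s 0) (n : ℝ) := by
  induction n with
  | zero => simp [min_eq_right (le_max_right s 0)]
  | succ m ih =>
    rw [Fin.sum_univ_castSucc]
    simp only [Fin.coe_castSucc, Fin.val_last]
    rw [ih]
    have hm : (0:ℝ) ≤ m := Nat.cast_nonneg m
    push_cast
    simp only [min_def, max_def]
    split_ifs <;> linarith

private lemma clamp_single (n : ℕ) (hn : 1 ≤ n) (s : ℝ) (hs : 0 ≤ s) :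
    ∃ k : Fin n, ∀ i : Fin n, i ≠ k →
      min (max (s - ((i : ℕ) : ℝ)) 0) 1 = 0 ∨ min (max (s - ((i : ℕ) : ℝ)) 0) 1 = 1 := by
  refine ⟨⟨min ⌊s⌋₊ (n-1), by omega⟩, fun i hi => ?_⟩
  have hine : (i : ℕ) ≠ min ⌊s⌋₊ (n-1) := fun h => hi (Fin.ext h)
  rcases lt_or_gt_of_ne hine with h | h
  · -- i < k : the function value is 1
    right
    have h1 : (i : ℕ) + 1 ≤ ⌊s⌋₊ := by omega
    have h2 : ((i : ℕ) : ℝ) + 1 ≤ s := by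
      calc ((i : ℕ) : ℝ) + 1 = (((i : ℕ) + 1 : ℕ) : ℝ) := by push_cast; ring
        _ ≤ (⌊s⌋₊ : ℝ) := by exact_mod_cast h1
        _ ≤ s := Nat.floor_le hs
    rw [min_eq_right (le_max_of_le_left (by linarith))]
  · -- i > k : the function value is 0
    left
    have h1 : ⌊s⌋₊ < (i : ℕ) := by
      have := i.isLt; omega
    have h2 : s - ((i : ℕ) : ℝ) ≤ 0 := by
      have h3 : s < (⌊s⌋₊ : ℝ) + 1 := Nat.lt_floor_add_one s
      have h4 : ((⌊s⌋₊ : ℕ) : ℝ) + 1 ≤ ((i : ℕ) : ℝ) := by exact_mod_cast h1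
      linarith
    rw [max_eq_right h2, min_eq_left zero_le_one]

private lemma cfc_mem_elemental' {A : Type*} [CStarAlgebra A] (b : A) (hb : IsSelfAdjoint b)
    (g : ℝ → ℝ) : cfc g b ∈ StarAlgebra.elemental ℂ b := by
  have := hb.isStarNormal
  rw [cfc_real_eq_complex g hb]
  by_cases hg : ContinuousOn (fun x : ℂ => (g x.re : ℂ)) (spectrum ℂ b)
  · rw [cfc_apply _ b hb.isStarNormal hg, cfcHom_eq_of_isStarNormal]
    rw [StarAlgHom.comp_apply]
    exact Subtype.coe_prop _
  · rw [cfc_apply_of_not_continuousOn b hg]; exact zero_mem _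

private lemma commute_cfc' {A : Type*} [CStarAlgebra A] {x b : A} (hx : IsSelfAdjoint x)
    (hb : IsSelfAdjoint b) (hxb : x * b = b * x) (g : ℝ → ℝ) :
    x * cfc g b = cfc g b * x := by
  let S : StarSubalgebra ℂ A :=
  { carrier := {y | x * y = y * x}
    mul_mem' := fun {y z} hy hz => by
      simp only [Set.mem_setOf_eq] at *
      rw [← mul_assoc, hy, mul_assoc, hz, mul_assoc]
    add_mem' := fun {y z} hy hz => by
      simp only [Set.mem_setOf_eq] at *
      rw [mul_add, hy, hz, add_mul]
    algebraMap_mem' := fun c => (Algebra.commutes c x).symm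
    one_mem' := by simp only [Set.mem_setOf_eq, mul_one, one_mul]
    star_mem' := fun {y} hy => by
      simp only [Set.mem_setOf_eq] at *
      have h := congrArg star hy
      rw [star_mul, star_mul, hx.star_eq] at h
      exact h.symm }
  have hS : IsClosed (S : Set A) :=
    isClosed_eq (continuous_const.mul continuous_id) (continuous_id.mul continuous_const)
  have hbS : b ∈ S := hxb
  exact StarAlgebra.elemental.le_of_mem hS hbS (cfc_mem_elemental' b hb g)

/-- tracial projectionisation computation. Let `A` be a unital C⋆-algebra,
`τ` a tracial state on `A`, `n ≥ 1`, `b ∈ A` a positive contraction and `a ∈ A`. Let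
`f i : ℝ → ℝ`, `f i t = min (max (n⬝t - i) 0) 1` for `i = 0, …, n-1` (so `f i` vanishes on
`[0, i/n]`, is `1` on `[(i+1)/n, 1]` and is linear in between; here `i` plays the role of the
paper's `i - 1`). Suppose `p 0, …, p (n-1)` are pairwise orthogonal projections commuting with
`b` such that `τ (p i * x) = τ x / n` for every `x` in the C⋆-subalgebra of `A` generated by
`{a, b}`. Put `P := ∑ i, p i * (f i)(b)` (continuous functional calculus). Then
(i) `P` is a positive contraction; (ii) `τ (P * a) = τ (b * a)` and `τ P = τ b`; and
(iii) `τ (P - P²) ≤ 1/n`, and consequently `τ ((P - P²)²) ≤ 1/n`. -/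
theorem stmt7 (A : Type*) [CStarAlgebra A] [PartialOrder A] [StarOrderedRing A]
    (τ : A →ₗ[ℂ] ℂ) (hτ1 : τ 1 = 1)
    (hτpos : ∀ x : A, 0 ≤ τ (star x * x))
    (hτtr : ∀ x y : A, τ (x * y) = τ (y * x))
    (n : ℕ) (hn : 1 ≤ n)
    (b : A) (hb : 0 ≤ b) (hb1 : ‖b‖ ≤ 1) (a : A)
    (f : Fin n → ℝ → ℝ)
    (hf : ∀ (i : Fin n) (t : ℝ), f i t = min (max ((n : ℝ) * t - ((i : ℕ) : ℝ)) 0) 1)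
    (p : Fin n → A)
    (hpsa : ∀ i, IsSelfAdjoint (p i))
    (hpidem : ∀ i, p i * p i = p i)
    (hportho : ∀ i j, i ≠ j → p i * p j = 0)
    (hpb : ∀ i, p i * b = b * p i)
    (hptr : ∀ (i : Fin n),
      ∀ x ∈ (StarAlgebra.adjoin ℂ ({a, b} : Set A)).topologicalClosure,
        τ (p i * x) = τ x / (n : ℂ))
    (P : A) (hP : P = ∑ i : Fin n, p i * cfc (f i) b) :
    (0 ≤ P ∧ ‖P‖ ≤ 1) ∧
    (τ (P * a) = τ (b * a) ∧ τ P = τ b) ∧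
    (τ (P - P ^ 2) ≤ ((1 : ℂ) / n) ∧ τ ((P - P ^ 2) ^ 2) ≤ ((1 : ℂ) / n)) := by
  have hnC : (n : ℂ) ≠ 0 := Nat.cast_ne_zero.mpr (by omega)
  have hbsa : IsSelfAdjoint b := IsSelfAdjoint.of_nonneg hb
  have hspec : ∀ t ∈ spectrum ℝ b, 0 ≤ t ∧ t ≤ 1 := by
    obtain _ | _ := subsingleton_or_nontrivial A
    · exact fun t ht => absurd (isUnit_of_subsingleton _) (spectrum.mem_iff.mp ht)
    · exact fun t ht =>
        ⟨spectrum_nonneg_of_nonneg hb ht,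
          le_trans (le_trans (Real.le_norm_self t) (spectrum.norm_le_norm_of_mem ht)) hb1⟩
  have hfc : ∀ i, ContinuousOn (f i) (spectrum ℝ b) := fun i => by
    have h : f i = fun t => min (max ((n : ℝ) * t - ((i:ℕ):ℝ)) 0) 1 := funext (hf i)
    rw [h]; fun_prop
  have hf0 : ∀ (i) (t : ℝ), 0 ≤ f i t := fun i t => by
    rw [hf]; exact le_min (le_max_right _ _) zero_le_one
  have hf1 : ∀ (i) (t : ℝ), f i t ≤ 1 := fun i t => by
    rw [hf]; exact min_le_right _ _
  set S := (StarAlgebra.adjoin ℂ ({a, b} : Set A)).topologicalClosure with hSdef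
  have hSclosed : IsClosed (S : Set A) := StarSubalgebra.isClosed_topologicalClosure _
  have haS : a ∈ S := StarSubalgebra.le_topologicalClosure _
    (StarAlgebra.subset_adjoin ℂ _ (Set.mem_insert a {b}))
  have hbS : b ∈ S := StarSubalgebra.le_topologicalClosure _
    (StarAlgebra.subset_adjoin ℂ _ (by simp))
  have hcfcS : ∀ g : ℝ → ℝ, cfc g b ∈ S := fun g =>
    StarAlgebra.elemental.le_of_mem hSclosed hbS (cfc_mem_elemental' b hbsa g)
  have hcomm : ∀ (i) (g : ℝ → ℝ), p i * cfc g b = cfc g b * p i := fun i g =>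
    commute_cfc' (hpsa i) hbsa (hpb i) g
  have hτmono : ∀ x y : A, x ≤ y → τ x ≤ τ y := by
    intro x y hxy
    rw [← sub_nonneg, ← map_sub]
    have h1 : y - x = star (CFC.sqrt (y - x)) * CFC.sqrt (y - x) := by
      rw [(IsSelfAdjoint.of_nonneg (CFC.sqrt_nonneg (y - x))).star_eq,
        CFC.sqrt_mul_sqrt_self (y - x) (sub_nonneg.mpr hxy)]
    rw [h1]
    exact hτpos _
  -- conjugation identity
  have hconj : ∀ (i) (g : ℝ → ℝ),
      p i * cfc g b = star (p i) * cfc g b * p i := fun i g => by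
    rw [(hpsa i).star_eq, mul_assoc, ← hcomm i, ← mul_assoc, hpidem i]
  -- (i) positivity
  have hPpos : 0 ≤ P := by
    rw [hP]
    refine Finset.sum_nonneg fun i _ => ?_
    rw [hconj i]
    exact star_left_conjugate_nonneg (cfc_nonneg fun t _ => hf0 i t) _
  have hPle : P ≤ 1 := by
    rw [hP]
    have hq : ∀ i : Fin n, p i * cfc (f i) b ≤ p i := fun i => by
      calc p i * cfc (f i) b = star (p i) * cfc (f i) b * p i := hconj i _
        _ ≤ star (p i) * 1 * p i :=
            star_left_conjugate_le_conjugate (cfc_le_one _ _ fun t _ => hf1 i t) _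
        _ = p i := by rw [mul_one, (hpsa i).star_eq, hpidem i]
    refine le_trans (Finset.sum_le_sum fun i _ => hq i) ?_
    have hqq : (∑ i : Fin n, p i) * (∑ i : Fin n, p i) = ∑ i : Fin n, p i := by
      rw [Finset.sum_mul_sum]
      refine Finset.sum_congr rfl fun i _ => ?_
      rw [Finset.sum_eq_single i (fun j _ hj => hportho i j (Ne.symm hj)) (by simp),
        hpidem i]
    have hqsa : IsSelfAdjoint (∑ i : Fin n, p i) := by
      rw [IsSelfAdjoint, star_sum]
      exact Finset.sum_congr rfl fun i _ => (hpsa i).star_eq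
    have h0 : (0:A) ≤ 1 - ∑ i : Fin n, p i := by
      have h1q : 1 - (∑ i : Fin n, p i) =
          star (1 - ∑ i : Fin n, p i) * (1 - ∑ i : Fin n, p i) := by
        rw [star_sub, star_one, hqsa.star_eq]
        have hexp : (1 - ∑ i : Fin n, p i) * (1 - ∑ i : Fin n, p i)
            = 1 - (∑ i : Fin n, p i) - (∑ i : Fin n, p i)
              + (∑ i : Fin n, p i) * (∑ i : Fin n, p i) := by noncomm_ring
        rw [hexp, hqq]
        abel
      rw [h1q]
      exact star_mul_self_nonneg _
    exact sub_nonneg.mp h0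
  have hPnorm : ‖P‖ ≤ 1 := (CStarAlgebra.norm_le_one_iff_of_nonneg P hPpos).mpr hPle
  -- product of two such sums
  have hkey : ∀ (u v : Fin n → ℝ → ℝ), (∀ i, ContinuousOn (u i) (spectrum ℝ b)) →
      (∀ i, ContinuousOn (v i) (spectrum ℝ b)) →
      (∑ i : Fin n, p i * cfc (u i) b) * (∑ i : Fin n, p i * cfc (v i) b)
        = ∑ i : Fin n, p i * cfc (fun t => u i t * v i t) b := by
    intro u v hu hv
    rw [Finset.sum_mul_sum]
    refine Finset.sum_congr rfl fun i _ => ?_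
    have hterm : ∀ j : Fin n, p i * cfc (u i) b * (p j * cfc (v j) b)
        = p i * p j * (cfc (u i) b * cfc (v j) b) := fun j => by
      calc p i * cfc (u i) b * (p j * cfc (v j) b)
          = p i * (cfc (u i) b * p j) * cfc (v j) b := by
            rw [mul_assoc, mul_assoc, mul_assoc]
        _ = p i * (p j * cfc (u i) b) * cfc (v j) b := by rw [hcomm j]
        _ = p i * p j * (cfc (u i) b * cfc (v j) b) := by
            rw [← mul_assoc, ← mul_assoc, mul_assoc (p i * p j)]
    rw [Finset.sum_eq_single i (fun j _ hj => by
        rw [hterm j, hportho i j (Ne.symm hj), zero_mul]) (by simp)]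
    rw [hterm i, hpidem i, ← cfc_mul _ _ b (hu i) (hv i)]
  -- trace helper
  have htr : ∀ (u : Fin n → ℝ → ℝ), (∀ i, ContinuousOn (u i) (spectrum ℝ b)) → ∀ x ∈ S,
      τ ((∑ i : Fin n, p i * cfc (u i) b) * x)
        = τ (cfc (fun t => ∑ i : Fin n, u i t) b * x) / n := by
    intro u hu x hx
    rw [Finset.sum_mul, map_sum]
    have h1 : ∀ i : Fin n, τ (p i * cfc (u i) b * x) = τ (cfc (u i) b * x) / n := fun i => by
      rw [mul_assoc]
      exact hptr i _ (mul_mem (hcfcS (u i)) hx)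
    rw [Finset.sum_congr rfl fun i _ => h1 i, ← Finset.sum_div]
    congr 1
    rw [← map_sum, ← Finset.sum_mul]
    congr 2
    rw [show (fun t => ∑ i : Fin n, u i t) = ∑ i : Fin n, u i from
      funext fun t => (Finset.sum_apply t Finset.univ u).symm]
    exact (cfc_sum_univ u b hu).symm
  -- sum of the f i's
  have hsumf : cfc (fun t => ∑ i : Fin n, f i t) b = (n : ℝ) • b := by
    have heq : ∀ t ∈ spectrum ℝ b, (fun t => ∑ i : Fin n, f i t) t = (fun t => (n:ℝ) * t) t := by
      intro t ht
      simp only [hf]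
      rw [clamp_sum n ((n:ℝ)*t)]
      obtain ⟨ht0, ht1⟩ := hspec t ht
      have hnt0 : 0 ≤ (n:ℝ) * t := by positivity
      have hn' : (0:ℝ) ≤ (n:ℝ) := Nat.cast_nonneg n
      rw [max_eq_left hnt0, min_eq_left (by nlinarith)]
    rw [cfc_congr heq, cfc_const_mul_id (n:ℝ) b hbsa]
  have hsmul : ∀ z : A, (n : ℝ) • z = (n : ℂ) • z := fun z => by
    rw [Nat.cast_smul_eq_nsmul ℝ, Nat.cast_smul_eq_nsmul ℂ]
  have hmain : ∀ x ∈ S, τ (P * x) = τ (b * x) := by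
    intro x hx
    rw [hP, htr f hfc x hx, hsumf, smul_mul_assoc, hsmul, map_smul, smul_eq_mul]
    field_simp
  have hPa : τ (P * a) = τ (b * a) := hmain a haS
  have hPtr : τ P = τ b := by
    have := hmain 1 (one_mem S)
    rwa [mul_one, mul_one] at this
  -- (iii)
  have hgc : ∀ i, ContinuousOn (fun t => f i t - f i t * f i t) (spectrum ℝ b) :=
    fun i => (hfc i).sub ((hfc i).mul (hfc i))
  have hQ : P - P ^ 2 = ∑ i : Fin n, p i * cfc (fun t => f i t - f i t * f i t) b := by
    rw [sq, hP, hkey f f hfc hfc, ← hP, hP, ← Finset.sum_sub_distrib]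
    refine Finset.sum_congr rfl fun i _ => ?_
    rw [← mul_sub, cfc_sub (f i) (fun t => f i t * f i t) b (hfc i) ((hfc i).mul (hfc i))]
  have hQc : ∀ i, ContinuousOn
      (fun t => (f i t - f i t * f i t) * (f i t - f i t * f i t)) (spectrum ℝ b) :=
    fun i => (hgc i).mul (hgc i)
  have hQ2 : (P - P ^ 2) ^ 2 = ∑ i : Fin n,
      p i * cfc (fun t => (f i t - f i t * f i t) * (f i t - f i t * f i t)) b := by
    rw [sq, hQ, hkey _ _ hgc hgc]
  -- pointwise bounds
  have hgbound : ∀ t ∈ spectrum ℝ b,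
      (∑ i : Fin n, (f i t - f i t * f i t)) ≤ 1 ∧
      (∑ i : Fin n, (f i t - f i t * f i t) * (f i t - f i t * f i t)) ≤ 1 := by
    intro t ht
    obtain ⟨ht0, ht1⟩ := hspec t ht
    obtain ⟨k, hk⟩ := clamp_single n hn ((n:ℝ)*t) (by positivity)
    have hzero : ∀ i : Fin n, i ≠ k → f i t - f i t * f i t = 0 := fun i hi => by
      rw [hf i t]
      rcases hk i hi with h | h <;> rw [h] <;> ring
    have hk0 := hf0 k t
    have hk1 := hf1 k t
    constructor
    · rw [Finset.sum_eq_single k (fun i _ hi => hzero i hi) (by simp)]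
      nlinarith
    · rw [Finset.sum_eq_single k (fun i _ hi => by rw [hzero i hi]; ring) (by simp)]
      have h01 : 0 ≤ f k t - f k t * f k t := by nlinarith
      have h02 : f k t - f k t * f k t ≤ 1 := by nlinarith
      nlinarith
  -- division inequality in ℂ
  have hdiv : ∀ z w : ℂ, z ≤ w → z / (n:ℂ) ≤ w / (n:ℂ) := by
    intro z w hzw
    rw [div_eq_mul_inv, div_eq_mul_inv]
    have hinv : (0:ℂ) ≤ (n:ℂ)⁻¹ := by
      rw [show ((n:ℂ))⁻¹ = (((n:ℝ)⁻¹ : ℝ) : ℂ) by push_cast; ring]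
      exact Complex.zero_le_real.mpr (by positivity)
    exact mul_le_mul_of_nonneg_right hzw hinv
  have hbound : ∀ (u : Fin n → ℝ → ℝ), (∀ i, ContinuousOn (u i) (spectrum ℝ b)) →
      (∀ t ∈ spectrum ℝ b, (∑ i : Fin n, u i t) ≤ 1) →
      τ (∑ i : Fin n, p i * cfc (u i) b) ≤ 1 / (n:ℂ) := by
    intro u hu hub
    have h1 : τ (∑ i : Fin n, p i * cfc (u i) b)
        = τ (cfc (fun t => ∑ i : Fin n, u i t) b) / n := by
      have h2 := htr u hu 1 (one_mem S)
      rwa [mul_one, mul_one] at h2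
    rw [h1]
    refine hdiv _ _ ?_
    rw [← hτ1]
    exact hτmono _ _ (cfc_le_one _ _ fun t ht => hub t ht)
  have h3a : τ (P - P ^ 2) ≤ (1:ℂ) / n := by
    rw [hQ]
    exact hbound _ hgc fun t ht => (hgbound t ht).1
  have h3b : τ ((P - P ^ 2) ^ 2) ≤ (1:ℂ) / n := by
    rw [hQ2]
    exact hbound _ hQc fun t ht => (hgbound t ht).2
  exact ⟨⟨hPpos, hPnorm⟩, ⟨hPa, hPtr⟩, h3a, h3b⟩
end
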